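/- arXiv:2501.17445 — 6 statements merged into one kernel-verified Lean document; each statement's English description precedes it below -/
import Mathlib

section
/- Let n ≥ 1, let D ⊂ ℤⁿ be a finite nonempty set, and let S ⊂ ℤⁿ be a finite set. Then there exists a subset S' ⊆ S with |S'| ≥ |S| / |D|² such that the translates D + γ for γ ∈ S' are pairwise disjoint. -/
/-! Greedy selection: pick any `γ ∈ S`, discard every `s ∈ S` whose translate meets `D + γ`
(these satisfy `s ∈ γ + D - D`, so there are at most `|D|²` of them, `γ` included), and recurse
on the rest. Each chosen point costs at most `|D|²` points of `S`. -/

open Finset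

theorem Finset.exists_pairwise_card_le_mul {α : Type*} {r : α → α → Prop} [DecidableRel r]
    (hsymm : ∀ x y, r x y → r y x) (hirrefl : ∀ x, ¬ r x x) (k : ℕ) (S : Finset α)
    (hk : ∀ x ∈ S, #{y ∈ S | ¬ r x y} ≤ k) :
    ∃ S' ⊆ S, #S ≤ k * #S' ∧ (S' : Set α).Pairwise r := by
  classical
  induction S using Finset.strongInduction with
  | H S ih =>
  rcases S.eq_empty_or_nonempty with rfl | ⟨x, hx⟩
  · exact ⟨∅, empty_subset _, by simp, by simp⟩
  set T := {y ∈ S | ¬ r x y} with hT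
  have hxT : x ∈ T := mem_filter.2 ⟨hx, hirrefl x⟩
  obtain ⟨S', hS'sub, hcard, hpair⟩ := ih (S \ T) (sdiff_ssubset (filter_subset _ _) ⟨x, hxT⟩)
    fun y hy => (card_le_card (filter_subset_filter _ sdiff_subset)).trans (hk y (sdiff_subset hy))
  have hS'T : ∀ y ∈ S', r x y := fun y hy => by
    simpa [hT, (mem_sdiff.1 (hS'sub hy)).1] using (mem_sdiff.1 (hS'sub hy)).2
  have hxS' : x ∉ S' := fun h => hirrefl x (hS'T x h)
  refine ⟨insert x S', insert_subset hx (hS'sub.trans sdiff_subset), ?_, ?_⟩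
  · calc #S ≤ #(S \ T) + #T := card_le_card_sdiff_add_card
      _ ≤ k * #S' + k := add_le_add hcard (hk x hx)
      _ = k * #(insert x S') := by rw [card_insert_of_notMem hxS']; ring
  · rw [coe_insert]
    exact hpair.insert fun y hy _ => ⟨hS'T y hy, hsymm _ _ (hS'T y hy)⟩

theorem Finset.card_filter_not_disjoint_image_add_le {G : Type*} [AddGroup G] [DecidableEq G]
    (D S : Finset G) (γ : G) :
    #{s ∈ S | ¬ Disjoint (D.image (· + γ)) (D.image (· + s))} ≤ #D ^ 2 := by
  have hsub : {s ∈ S | ¬ Disjoint (D.image (· + γ)) (D.image (· + s))} ⊆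
      (D ×ˢ D).image fun p => -p.2 + p.1 + γ := by
    intro s hs
    obtain ⟨-, x, hxγ, hxs⟩ := by simpa only [mem_filter, not_disjoint_iff] using hs
    obtain ⟨d, hd, rfl⟩ := mem_image.1 hxγ
    obtain ⟨d', hd', hdd'⟩ := mem_image.1 hxs
    refine mem_image.2 ⟨(d, d'), mk_mem_product hd hd', ?_⟩
    rw [add_assoc, ← hdd', neg_add_cancel_left]
  calc _ ≤ #((D ×ˢ D).image fun p => -p.2 + p.1 + γ) := card_le_card hsub
    _ ≤ #(D ×ˢ D) := card_image_le
    _ = #D ^ 2 := by rw [card_product, sq]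

theorem stmt0_general (n : ℕ) (D S : Finset (Fin n → ℤ)) (hD : D.Nonempty) :
    ∃ S' ⊆ S, (S.card : ℝ) / ((D.card : ℝ) ^ 2) ≤ (S'.card : ℝ) ∧
      ∀ γ ∈ S', ∀ γ' ∈ S', γ ≠ γ' →
        Disjoint (D.image (fun d => d + γ)) (D.image (fun d => d + γ')) := by
  obtain ⟨S', hS'S, hcard, hpair⟩ := S.exists_pairwise_card_le_mul
    (r := fun γ γ' => Disjoint (D.image (· + γ)) (D.image (· + γ')))
    (fun _ _ h => h.symm) (fun γ h => (hD.image _).ne_empty ((disjoint_self_iff_empty _).1 h))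
    (#D ^ 2) fun γ _ => card_filter_not_disjoint_image_add_le D S γ
  exact ⟨S', hS'S, div_le_of_le_mul₀ (by positivity) (by positivity)
    (by exact_mod_cast hcard.trans_eq (mul_comm _ _)),
    fun _ hγ _ hγ' hne => hpair hγ hγ' hne⟩

/-- Given a finite nonempty `D ⊂ ℤⁿ` and a finite `S ⊂ ℤⁿ`, there is
`S' ⊆ S` with `|S'| ≥ |S|/|D|²` whose translates `D + γ`, `γ ∈ S'`, are pairwise disjoint. -/
theorem stmt0 (n : ℕ) (hn : 1 ≤ n) (D S : Finset (Fin n → ℤ)) (hD : D.Nonempty) :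
    ∃ S' ⊆ S, (S.card : ℝ) / ((D.card : ℝ) ^ 2) ≤ (S'.card : ℝ) ∧
      ∀ γ ∈ S', ∀ γ' ∈ S', γ ≠ γ' →
        Disjoint (D.image (fun d => d + γ)) (D.image (fun d => d + γ')) :=
  stmt0_general n D S hD
end

section
/- Let n ≥ 2 and let K, L ⊆ ℤⁿ be rectangles (products of finite integer intervals, each of length ≥ 1). If ∂K ∩ ∂L = ∅ and K ∩ L ≠ ∅, then K ⊆ L or L ⊆ K. Consequently, if the boundaries of K and L are at distance greater than 0 from each other (in particular disjoint), then either K ∩ L = ∅, or K ⊆ L, or L ⊆ K. -/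
/-- The boundary of a subset of `ℤⁿ`: points of `A` at ℓ¹-distance 1 from the complement. -/
def gridBoundary (n : ℕ) (A : Set (Fin n → ℤ)) : Set (Fin n → ℤ) :=
  {x | x ∈ A ∧ ∃ y, y ∉ A ∧ (∑ i, |x i - y i|) = 1}

/-!
Suppose the rectangles `K` and `L` meet but neither contains the other. Then in some coordinate
`i` a face of `L` cuts through `K`, and in some coordinate `j` a face of `K` cuts through `L`.
Starting from a common point and moving its `i`-th coordinate onto that face of `L` and its
`j`-th coordinate onto that face of `K` gives a point of `∂K ∩ ∂L`. If `i = j`, any other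
coordinate `k` can serve instead of one of them, since the larger of the two lower endpoints in
coordinate `k` is an endpoint of one rectangle lying in the other; this is where `n ≥ 2` enters.
-/

open Set

variable {n : ℕ}

theorem setOf_forall_le_and_le_eq_Icc {ι : Type*} {α : ι → Type*} [∀ i, Preorder (α i)]
    (a b : ∀ i, α i) : {x | ∀ i, a i ≤ x i ∧ x i ≤ b i} = Icc a b := by
  ext x
  simp [Pi.le_def, forall_and]

theorem mem_gridBoundary_of_add_single_notMem {A : Set (Fin n → ℤ)} {x : Fin n → ℤ}
    (hx : x ∈ A) (j : Fin n) {e : ℤ} (he : |e| = 1) (h : x + Pi.single j e ∉ A) :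
    x ∈ gridBoundary n A := by
  refine ⟨hx, x + Pi.single j e, h, ?_⟩
  simp only [Pi.add_apply, sub_add_cancel_left, abs_neg]
  rw [Finset.sum_eq_single j (fun k _ hk => by simp [Pi.single_eq_of_ne hk]) (by simp)]
  simpa using he

theorem mem_gridBoundary_Icc {a b x : Fin n → ℤ} (hx : x ∈ Icc a b) {j : Fin n}
    (hj : x j = a j ∨ x j = b j) : x ∈ gridBoundary n (Icc a b) := by
  rcases hj with hj | hj
  · refine mem_gridBoundary_of_add_single_notMem hx j (e := -1) (by simp) fun h => ?_
    have := h.1 j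
    simp only [Pi.add_apply, Pi.single_eq_same] at this
    omega
  · refine mem_gridBoundary_of_add_single_notMem hx j (e := 1) (by simp) fun h => ?_
    have := h.2 j
    simp only [Pi.add_apply, Pi.single_eq_same] at this
    omega

theorem update_mem_Icc {ι : Type*} [DecidableEq ι] {α : ι → Type*} [∀ i, Preorder (α i)]
    {a b x : ∀ i, α i} (hx : x ∈ Icc a b) {i : ι} {v : α i} (hv : v ∈ Icc (a i) (b i)) :
    Function.update x i v ∈ Icc a b := by
  rw [← pi_univ_Icc] at hx ⊢
  exact (update_mem_pi_iff_of_mem hx).mpr fun _ => hv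

theorem gridBoundary_inter_nonempty_of_faces {a b c d z : Fin n → ℤ}
    (hz : z ∈ Icc a b ∩ Icc c d) {i j : Fin n} (hij : i ≠ j)
    (hi : c i ∈ Icc (a i) (b i) ∨ d i ∈ Icc (a i) (b i))
    (hj : a j ∈ Icc (c j) (d j) ∨ b j ∈ Icc (c j) (d j)) :
    (gridBoundary n (Icc a b) ∩ gridBoundary n (Icc c d)).Nonempty := by
  classical
  have hzK := hz.1
  have hzL := hz.2
  simp only [mem_inter_iff, mem_Icc, Pi.le_def] at hz
  obtain ⟨⟨hza, hzb⟩, hzc, hzd⟩ := hz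
  obtain ⟨v, hvK, hvL, hv⟩ : ∃ v, v ∈ Icc (a i) (b i) ∧ v ∈ Icc (c i) (d i) ∧
      (v = c i ∨ v = d i) := by
    have := hzc i; have := hzd i
    rcases hi with hi | hi
    · exact ⟨c i, hi, ⟨le_rfl, by omega⟩, .inl rfl⟩
    · exact ⟨d i, hi, ⟨by omega, le_rfl⟩, .inr rfl⟩
  obtain ⟨w, hwK, hwL, hw⟩ : ∃ w, w ∈ Icc (a j) (b j) ∧ w ∈ Icc (c j) (d j) ∧
      (w = a j ∨ w = b j) := by
    have := hza j; have := hzb j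
    rcases hj with hj | hj
    · exact ⟨a j, ⟨le_rfl, by omega⟩, hj, .inl rfl⟩
    · exact ⟨b j, ⟨by omega, le_rfl⟩, hj, .inr rfl⟩
  set x := Function.update (Function.update z j w) i v
  have hxi : x i = v := by simp [x]
  have hxj : x j = w := by simp [x, hij.symm]
  refine ⟨x, mem_gridBoundary_Icc ?_ (j := j) (hxj ▸ hw),
    mem_gridBoundary_Icc ?_ (j := i) (hxi ▸ hv)⟩
  · exact update_mem_Icc (update_mem_Icc hzK hwK) hvK
  · exact update_mem_Icc (update_mem_Icc hzL hwL) hvL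

theorem exists_face_mem_of_not_Icc_subset {a b c d z : Fin n → ℤ}
    (hz : z ∈ Icc a b ∩ Icc c d) (h : ¬ Icc a b ⊆ Icc c d) :
    ∃ i, c i ∈ Icc (a i) (b i) ∨ d i ∈ Icc (a i) (b i) := by
  have hab : a ≤ b := hz.1.1.trans hz.1.2
  simp only [mem_inter_iff, mem_Icc, Pi.le_def] at hz
  obtain ⟨⟨hza, hzb⟩, hzc, hzd⟩ := hz
  by_contra! hfaces
  refine h ((Icc_subset_Icc_iff hab).mpr ⟨Pi.le_def.mpr fun i => ?_, Pi.le_def.mpr fun i => ?_⟩)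
  all_goals
    have := hza i; have := hzb i; have := hzc i; have := hzd i
    have := hfaces i
    simp only [mem_Icc, not_and_or, not_le] at this
    omega

theorem lower_face_mem_or {a b c d z : Fin n → ℤ} (hz : z ∈ Icc a b ∩ Icc c d) (k : Fin n) :
    a k ∈ Icc (c k) (d k) ∨ c k ∈ Icc (a k) (b k) := by
  simp only [mem_inter_iff, mem_Icc, Pi.le_def] at hz
  obtain ⟨⟨hza, hzb⟩, hzc, hzd⟩ := hz
  have := hza k; have := hzb k; have := hzc k; have := hzd k
  simp only [mem_Icc]
  omega

theorem Icc_subset_or_subset_of_gridBoundary_inter_eq_empty (hn : 2 ≤ n)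
    {a b c d : Fin n → ℤ} (hbd : gridBoundary n (Icc a b) ∩ gridBoundary n (Icc c d) = ∅)
    (hne : (Icc a b ∩ Icc c d).Nonempty) : Icc a b ⊆ Icc c d ∨ Icc c d ⊆ Icc a b := by
  obtain ⟨z, hz⟩ := hne
  by_contra! ⟨hKL, hLK⟩
  obtain ⟨i, hi⟩ := exists_face_mem_of_not_Icc_subset hz hKL
  obtain ⟨j, hj⟩ := exists_face_mem_of_not_Icc_subset (inter_comm _ _ ▸ hz) hLK
  suffices (gridBoundary n (Icc a b) ∩ gridBoundary n (Icc c d)).Nonempty by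
    simp [hbd] at this
  rcases ne_or_eq i j with hij | rfl
  · exact gridBoundary_inter_nonempty_of_faces hz hij hi hj
  · have : Nontrivial (Fin n) := Fin.nontrivial_iff_two_le.mpr hn
    obtain ⟨k, hk⟩ := exists_ne i
    rcases lower_face_mem_or hz k with hk' | hk'
    · exact gridBoundary_inter_nonempty_of_faces hz hk.symm hi (.inl hk')
    · exact gridBoundary_inter_nonempty_of_faces hz hk (.inl hk') hj

/-- For `n ≥ 2` and rectangles `K, L ⊆ ℤⁿ` (products of finite integer
intervals of length ≥ 1), if `∂K ∩ ∂L = ∅` and `K ∩ L ≠ ∅` then `K ⊆ L` or `L ⊆ K`;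
consequently if `∂K ∩ ∂L = ∅` then `K ∩ L = ∅`, or `K ⊆ L`, or `L ⊆ K`. -/
theorem stmt5 (n : ℕ) (hn : 2 ≤ n) (K L : Set (Fin n → ℤ))
    (hK : ∃ a b : Fin n → ℤ, (∀ i, a i + 1 ≤ b i) ∧ K = {x | ∀ i, a i ≤ x i ∧ x i ≤ b i})
    (hL : ∃ a b : Fin n → ℤ, (∀ i, a i + 1 ≤ b i) ∧ L = {x | ∀ i, a i ≤ x i ∧ x i ≤ b i})
    (hbd : gridBoundary n K ∩ gridBoundary n L = ∅) :
    ((K ∩ L).Nonempty → K ⊆ L ∨ L ⊆ K) ∧ (K ∩ L = ∅ ∨ K ⊆ L ∨ L ⊆ K) := by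
  obtain ⟨a, b, -, rfl⟩ := hK
  obtain ⟨c, d, -, rfl⟩ := hL
  simp only [setOf_forall_le_and_le_eq_Icc] at hbd ⊢
  have nested := Icc_subset_or_subset_of_gridBoundary_inter_eq_empty hn hbd
  exact ⟨nested, (eq_empty_or_nonempty _).imp_right nested⟩
end

section
/- Let n ≥ 2 and let S ⊆ ℤⁿ be a nonempty set that is connected in the grid graph Gₙ and satisfies the following 'local convexity' property: for every 4-cycle (w, x, y, z) in Gₙ with w, x, y ∈ S, also z ∈ S. Then S is a product I₁ × ⋯ × Iₙ of (possibly infinite) intervals in ℤ. -/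
/-!
Closing 4-cycles lets membership in `S` propagate one box at a time: if `x ∈ S` and the box
spanned by a neighbour `x + ε eᵢ` of `x` and some `y` lies in `S`, then every point `z` of the
facet `zᵢ = xᵢ` of the box spanned by `x` and `y` lies in `S`, by induction on the distance from
`z` to `x` (the square with corners `z`, `z + ε eᵢ` and their neighbours one step closer to `x`
has three corners in `S`). Along a path from `x` to `y` in `S` this shows that `S` contains the
box spanned by `x` and `y`. A nonempty set containing the box spanned by any two of its points is
the product of its coordinate projections, and these projections are intervals.
-/

/-- `d` is one of the `2n` unit directions `±eᵢ` of `ℤⁿ`. -/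
def IsUnitDir (n : ℕ) (d : Fin n → ℤ) : Prop :=
  ∃ i : Fin n, d = Pi.single i 1 ∨ d = -Pi.single i 1

/-- An (order-convex, possibly infinite) interval in `ℤ`. -/
def IsIntervalZ (I : Set ℤ) : Prop := ∀ a ∈ I, ∀ b ∈ I, Set.Icc a b ⊆ I

open Set Function

section Lattice

variable {ι α : Type*} [Lattice α]

theorem mem_uIcc_pi_iff {x y z : ι → α} : z ∈ uIcc x y ↔ ∀ i, z i ∈ uIcc (x i) (y i) := by
  rw [← pi_univ_uIcc, mem_univ_pi]

variable [DecidableEq ι]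

theorem update_mem_uIcc {x y : ι → α} {i : ι} {c : α} (hc : c ∈ uIcc (x i) (y i)) :
    update x i c ∈ uIcc x y := by
  rw [mem_uIcc_pi_iff]
  intro k
  rcases eq_or_ne k i with rfl | hk
  · simpa using hc
  · simp [hk]

variable {S : Set (ι → α)}

theorem ordConnected_image_eval (hS : ∀ x ∈ S, ∀ y ∈ S, uIcc x y ⊆ S) (i : ι) :
    (eval i '' S).OrdConnected := by
  refine ⟨?_⟩
  rintro _ ⟨u, hu, rfl⟩ _ ⟨v, hv, rfl⟩ c hc
  exact ⟨update u i c, hS u hu v hv (update_mem_uIcc (Icc_subset_uIcc hc)), update_self i c u⟩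

theorem eq_setOf_forall_mem_image_eval [Fintype ι] (hne : S.Nonempty)
    (hS : ∀ x ∈ S, ∀ y ∈ S, uIcc x y ⊆ S) : S = {z | ∀ i, z i ∈ eval i '' S} := by
  refine Subset.antisymm (fun z hz i => ⟨z, hz, rfl⟩) fun z hz => ?_
  choose v hvS hvz using hz
  have agree : ∀ s : Finset ι, ∃ w ∈ S, ∀ j ∈ s, w j = z j := by
    intro s
    induction s using Finset.induction_on with
    | empty => exact ⟨_, hne.some_mem, by simp⟩
    | insert i s _ ih =>
      obtain ⟨w, hw, hwz⟩ := ih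
      refine ⟨update w i (z i), hS w hw (v i) (hvS i) (update_mem_uIcc ?_), ?_⟩
      · rw [← hvz i]
        exact right_mem_uIcc
      · intro j hj
        rcases eq_or_ne j i with rfl | hji
        · simp
        · simpa [hji] using hwz j (by simpa [hji] using hj)
  obtain ⟨w, hw, hwz⟩ := agree Finset.univ
  rwa [← funext fun j => hwz j (Finset.mem_univ j)]

end Lattice

section Grid

variable {ι : Type*} [DecidableEq ι]

def SquareClosed (S : Set (ι → ℤ)) : Prop :=
  ∀ ⦃x : ι → ℤ⦄ ⦃i j : ι⦄ ⦃ε δ : ℤ⦄, i ≠ j → |ε| = 1 → |δ| = 1 → x ∈ S →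
    x + Pi.single i ε ∈ S → x + Pi.single j δ ∈ S → x + Pi.single i ε + Pi.single j δ ∈ S

theorem isUnitDir_single {n : ℕ} (i : Fin n) {ε : ℤ} (hε : |ε| = 1) :
    IsUnitDir n (Pi.single i ε) := by
  refine ⟨i, ?_⟩
  rcases (abs_eq zero_le_one).mp hε with rfl | rfl
  · exact Or.inl rfl
  · exact Or.inr (Pi.single_neg i 1)

theorem squareClosed_of_isUnitDir {n : ℕ} {S : Set (Fin n → ℤ)}
    (hconv : ∀ (x d d' : Fin n → ℤ), IsUnitDir n d → IsUnitDir n d' →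
      d ≠ d' → d ≠ -d' → x ∈ S → x + d ∈ S → x + d' ∈ S → x + d + d' ∈ S) :
    SquareClosed S := by
  intro x i j ε δ hij hε hδ hx hi hj
  have hε0 : ε ≠ 0 := by rintro rfl; simp at hε
  refine hconv x _ _ (isUnitDir_single i hε) (isUnitDir_single j hδ) ?_ ?_ hx hi hj <;>
  · intro h
    exact hε0 (by simpa [hij] using congrFun h i)

theorem exists_eq_add_single_of_sum_abs_sub_eq_one [Fintype ι] {u v : ι → ℤ}
    (h : ∑ i, |u i - v i| = 1) : ∃ i ε, |ε| = 1 ∧ v = u + Pi.single i ε := by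
  obtain ⟨i, -, hi⟩ : ∃ i ∈ Finset.univ, |u i - v i| ≠ 0 := by
    by_contra! h0
    simp [Finset.sum_eq_zero h0] at h
  rw [← Finset.add_sum_erase _ _ (Finset.mem_univ i)] at h
  have hrest_nonneg : 0 ≤ ∑ k ∈ Finset.univ.erase i, |u k - v k| :=
    Finset.sum_nonneg fun k _ => abs_nonneg _
  have hrest : ∀ k ∈ Finset.univ.erase i, |u k - v k| = 0 :=
    (Finset.sum_eq_zero_iff_of_nonneg fun k _ => abs_nonneg _).mp
      (by have := abs_nonneg (u i - v i); omega)
  refine ⟨i, v i - u i, by rw [abs_sub_comm]; have := abs_nonneg (u i - v i); omega, ?_⟩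
  ext k
  rcases eq_or_ne k i with rfl | hk
  · simp
  · have := hrest k (by simp [hk])
    simp only [abs_eq_zero, sub_eq_zero] at this
    simp [hk, this]

theorem exists_step_toward {a b : ℤ} (h : a ≠ b) :
    ∃ δ : ℤ, |δ| = 1 ∧ a + δ ∈ uIcc a b ∧ (a + δ - b).natAbs < (a - b).natAbs := by
  rcases h.lt_or_gt with h | h
  · exact ⟨1, by simp, by rw [mem_uIcc]; omega, by omega⟩
  · exact ⟨-1, by simp, by rw [mem_uIcc]; omega, by omega⟩

theorem add_single_mem_uIcc_add_single {x y z : ι → ℤ} {i : ι} (ε : ℤ) (hzi : z i = x i)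
    (hz : ∀ k ≠ i, z k ∈ uIcc (x k) (y k)) :
    z + Pi.single i ε ∈ uIcc (x + Pi.single i ε) y := by
  rw [mem_uIcc_pi_iff]
  intro k
  rcases eq_or_ne k i with rfl | hk
  · simp [hzi]
  · simpa [hk] using hz k hk

namespace SquareClosed

variable [Fintype ι] {S : Set (ι → ℤ)}

theorem mem_of_add_single_mem (hS : SquareClosed S) {x y : ι → ℤ} {i : ι} {ε : ℤ}
    (hε : |ε| = 1) (hx : x ∈ S) (hT : uIcc (x + Pi.single i ε) y ⊆ S) {z : ι → ℤ}
    (hzi : z i = x i) (hz : ∀ k ≠ i, z k ∈ uIcc (x k) (y k)) : z ∈ S := by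
  induction h : ∑ k, (z k - x k).natAbs using Nat.strong_induction_on generalizing z with
  | _ N ih =>
  rcases eq_or_ne z x with rfl | hzx
  · exact hx
  obtain ⟨j, hj⟩ := Function.ne_iff.mp hzx
  have hji : j ≠ i := fun hji => hj (hji ▸ hzi)
  obtain ⟨δ, hδ, hδmem, hδlt⟩ := exists_step_toward hj
  set z' := z + Pi.single j δ
  have hz' : ∀ k ≠ i, z' k ∈ uIcc (x k) (y k) := by
    intro k hk
    rcases eq_or_ne k j with rfl | hkj
    · exact uIcc_subset_uIcc (hz k hk) left_mem_uIcc (by simpa [z'] using hδmem)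
    · simpa [z', hkj] using hz k hk
  have hz'i : z' i = x i := by simp [z', hji.symm, hzi]
  have hz'S : z' ∈ S := by
    refine ih _ ?_ hz'i hz' rfl
    rw [← h]
    refine Finset.sum_lt_sum (fun k _ => ?_) ⟨j, Finset.mem_univ j, by simpa [z'] using hδlt⟩
    rcases eq_or_ne k j with rfl | hkj
    · simpa [z'] using hδlt.le
    · simp [z', hkj]
  have hc : z' + Pi.single i ε ∈ S := hT (add_single_mem_uIcc_add_single ε hz'i hz')
  have hc₁ : z' + Pi.single i ε + Pi.single i (-ε) ∈ S := by
    rwa [Pi.single_neg, add_neg_cancel_right]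
  have hc₂ : z' + Pi.single i ε + Pi.single j (-δ) ∈ S := by
    convert hT (add_single_mem_uIcc_add_single ε hzi hz) using 1
    simp only [z', Pi.single_neg]
    abel
  convert hS hji.symm (by rwa [abs_neg]) (by rwa [abs_neg]) hc hc₁ hc₂ using 1
  simp only [z', Pi.single_neg]
  abel

theorem uIcc_subset_of_add_single (hS : SquareClosed S) {x y : ι → ℤ} {i : ι} {ε : ℤ}
    (hε : |ε| = 1) (hx : x ∈ S) (hT : uIcc (x + Pi.single i ε) y ⊆ S) : uIcc x y ⊆ S := by
  intro z hz
  rw [mem_uIcc_pi_iff] at hz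
  by_cases hzi : z i = x i
  · exact hS.mem_of_add_single_mem hε hx hT hzi fun k _ => hz k
  · refine hT (mem_uIcc_pi_iff.mpr fun k => ?_)
    rcases eq_or_ne k i with rfl | hk
    · have := hz k
      rw [mem_uIcc] at this ⊢
      rcases (abs_eq zero_le_one).mp hε with rfl | rfl <;> simp <;> omega
    · simpa [hk] using hz k

theorem uIcc_subset_of_path (hS : SquareClosed S) :
    ∀ (ℓ : ℕ) (p : ℕ → ι → ℤ), (∀ j < ℓ, ∑ i, |p j i - p (j + 1) i| = 1) →
      (∀ j ≤ ℓ, p j ∈ S) → uIcc (p 0) (p ℓ) ⊆ S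
  | 0, p, _, hp => by simpa using hp 0 le_rfl
  | ℓ + 1, p, hstep, hp => by
    obtain ⟨i, ε, hε, hp₁⟩ := exists_eq_add_single_of_sum_abs_sub_eq_one (hstep 0 ℓ.succ_pos)
    refine hS.uIcc_subset_of_add_single (i := i) hε (hp 0 ℓ.succ.zero_le) ?_
    rw [← hp₁]
    exact hS.uIcc_subset_of_path ℓ (fun j => p (j + 1)) (fun j hj => hstep (j + 1) (by omega))
      fun j hj => hp (j + 1) (by omega)

end SquareClosed

end Grid

theorem stmt8_general (n : ℕ) (S : Set (Fin n → ℤ)) (hne : S.Nonempty)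
    (hconn : ∀ x ∈ S, ∀ y ∈ S, ∃ (ℓ : ℕ) (p : ℕ → Fin n → ℤ),
      p 0 = x ∧ p ℓ = y ∧ (∀ j < ℓ, (∑ i, |p j i - p (j + 1) i|) = 1) ∧ ∀ j ≤ ℓ, p j ∈ S)
    (hconv : ∀ (x d d' : Fin n → ℤ), IsUnitDir n d → IsUnitDir n d' →
      d ≠ d' → d ≠ -d' → x ∈ S → x + d ∈ S → x + d' ∈ S → x + d + d' ∈ S) :
    ∃ I : Fin n → Set ℤ, (∀ i, IsIntervalZ (I i)) ∧ S = {x | ∀ i, x i ∈ I i} := by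
  have hS : SquareClosed S := squareClosed_of_isUnitDir hconv
  have hbox : ∀ x ∈ S, ∀ y ∈ S, uIcc x y ⊆ S := by
    intro x hx y hy
    obtain ⟨ℓ, p, rfl, rfl, hstep, hp⟩ := hconn x hx y hy
    exact hS.uIcc_subset_of_path ℓ p hstep hp
  exact ⟨fun i => eval i '' S, fun i _ ha _ hb => (ordConnected_image_eval hbox i).out ha hb,
    eq_setOf_forall_mem_image_eval hne hbox⟩

/-- A nonempty subset `S ⊆ ℤⁿ` (`n ≥ 2`) that is connected in the grid
graph and closed under completing 4-cycles (if three consecutive vertices `x+d, x, x+d'`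
of a 4-cycle lie in `S`, so does the fourth `x+d+d'`) is a product of intervals. -/
theorem stmt8 (n : ℕ) (hn : 2 ≤ n) (S : Set (Fin n → ℤ)) (hne : S.Nonempty)
    (hconn : ∀ x ∈ S, ∀ y ∈ S, ∃ (ℓ : ℕ) (p : ℕ → Fin n → ℤ),
      p 0 = x ∧ p ℓ = y ∧ (∀ j < ℓ, (∑ i, |p j i - p (j + 1) i|) = 1) ∧ ∀ j ≤ ℓ, p j ∈ S)
    (hconv : ∀ (x d d' : Fin n → ℤ), IsUnitDir n d → IsUnitDir n d' →
      d ≠ d' → d ≠ -d' → x ∈ S → x + d ∈ S → x + d' ∈ S → x + d + d' ∈ S) :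
    ∃ I : Fin n → Set ℤ, (∀ i, IsIntervalZ (I i)) ∧ S = {x | ∀ i, x i ∈ I i} :=
  stmt8_general n S hne hconn hconv
end

section
/- Fix q ≥ 1 and a free action of ℤⁿ on a set X. Let 𝓡 be a rectangular q-toast on X, i.e., a family of rectangles (sets of the form R·x for a rectangle R ⊂ ℤⁿ with all side lengths ≥ q) such that distinct K, L ∈ 𝓡 satisfy dist(∂K, ∂L) > q, and such that for all K, L ∈ 𝓡, either K ∩ L = ∅, K ⊆ L, or L ⊆ K. If x ∈ X is 𝓡-complete (i.e., the entire orbit ℤⁿ·x is covered by ⋃𝓡), then: (a) every point of ℤⁿ·x is contained in infinitely many pieces of 𝓡, and (b) for every piece K ∈ 𝓡 with K ⊆ ℤⁿ·x there is a piece K' ∈ 𝓡 with K ⊊ K'. -/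
/-- Boundary of a set `A ⊆ X` for a free `ℤⁿ`-action on `X`: points of `A` having an
orbit-neighbor (at ℓ¹-distance 1) outside `A`. -/
def actBdry (n : ℕ) {X : Type*} [AddAction (Fin n → ℤ) X] (A : Set X) : Set X :=
  {a | a ∈ A ∧ ∃ γ : Fin n → ℤ, (∑ i, |γ i|) = 1 ∧ γ +ᵥ a ∉ A}

/-- If `𝓡` is a rectangular `q`-toast (`q ≥ 1`) on a free `ℤⁿ`-action and
`x` is `𝓡`-complete (its whole orbit is covered by `⋃𝓡`), then (a) every point of the
orbit of `x` lies in infinitely many pieces of `𝓡`, and (b) every piece `K ∈ 𝓡`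
contained in the orbit of `x` is strictly contained in another piece `K' ∈ 𝓡`. -/
theorem stmt11 (n q : ℕ) (hn : 1 ≤ n) (hq : 1 ≤ q)
    (X : Type*) [AddAction (Fin n → ℤ) X]
    (hfree : ∀ (γ : Fin n → ℤ) (x : X), γ +ᵥ x = x → γ = 0)
    (𝓡 : Set (Set X))
    (hrect : ∀ K ∈ 𝓡, ∃ (x : X) (a b : Fin n → ℤ), (∀ i, (q : ℤ) ≤ b i - a i) ∧
      K = {y | ∃ γ : Fin n → ℤ, (∀ i, a i ≤ γ i ∧ γ i ≤ b i) ∧ y = γ +ᵥ x})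
    (hsep : ∀ K ∈ 𝓡, ∀ L ∈ 𝓡, K ≠ L →
      ∀ u ∈ actBdry n K, ∀ v ∈ actBdry n L,
        ∀ γ : Fin n → ℤ, γ +ᵥ u = v → (q : ℤ) < ∑ i, |γ i|)
    (hnest : ∀ K ∈ 𝓡, ∀ L ∈ 𝓡, K ∩ L = ∅ ∨ K ⊆ L ∨ L ⊆ K)
    (x : X) (hcomp : ∀ γ : Fin n → ℤ, γ +ᵥ x ∈ ⋃₀ 𝓡) :
    (∀ γ : Fin n → ℤ, {K | K ∈ 𝓡 ∧ γ +ᵥ x ∈ K}.Infinite) ∧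
    (∀ K ∈ 𝓡, K ⊆ {y | ∃ γ : Fin n → ℤ, y = γ +ᵥ x} → ∃ K' ∈ 𝓡, K ⊂ K') := by
  have hq1 : (1:ℤ) ≤ (q:ℤ) := by exact_mod_cast hq
  set orb : Set X := {y | ∃ γ : Fin n → ℤ, y = γ +ᵥ x} with horb
  -- freeness in two-point form
  have hfree' : ∀ (γ δ : Fin n → ℤ) (z : X), γ +ᵥ z = δ +ᵥ z → γ = δ := by
    intro γ δ z h
    have h2 : (γ - δ) +ᵥ (δ +ᵥ z) = δ +ᵥ z := by
      rw [← add_vadd, sub_add_cancel, h]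
    have := hfree _ _ h2
    exact sub_eq_zero.mp this
  -- basis vector
  let j : Fin n := ⟨0, hn⟩
  let e : Fin n → ℤ := Pi.single j 1
  have esum : (∑ i, |e i|) = 1 := by
    rw [Finset.sum_eq_single j]
    · simp [e]
    · intro i _ hij; simp [e, Pi.single_apply, hij]
    · simp
  have nesum : (∑ i, |(-e) i|) = 1 := by
    simpa using esum
  -- membership in a piece of the orbit forces the piece into the orbit
  have horbK : ∀ K ∈ 𝓡, ∀ y ∈ K, y ∈ orb → K ⊆ orb := by
    intro K hK y hyK hyo
    obtain ⟨x₀, a, b, hab, hKeq⟩ := hrect K hK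
    obtain ⟨δ, _, hyδ⟩ : ∃ δ : Fin n → ℤ, (∀ i, a i ≤ δ i ∧ δ i ≤ b i) ∧ y = δ +ᵥ x₀ := by
      rw [hKeq] at hyK; exact hyK
    obtain ⟨μ, hyμ⟩ := hyo
    intro z hzK
    obtain ⟨ν, _, hzν⟩ : ∃ ν : Fin n → ℤ, (∀ i, a i ≤ ν i ∧ ν i ≤ b i) ∧ z = ν +ᵥ x₀ := by
      rw [hKeq] at hzK; exact hzK
    refine ⟨ν - δ + μ, ?_⟩
    have hx₀ : x₀ = (-δ + μ) +ᵥ x := by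
      have : (-δ) +ᵥ y = x₀ := by rw [hyδ, ← add_vadd]; simp
      rw [← this, hyμ, ← add_vadd]
    rw [hzν, hx₀, ← add_vadd]
    ring_nf
  -- key step: every piece contained in the orbit has a strictly larger piece
  have key : ∀ K ∈ 𝓡, K ⊆ orb → ∃ K' ∈ 𝓡, K ⊂ K' := by
    intro K hK hKorb
    obtain ⟨x₀, a, b, hab, hKeq⟩ := hrect K hK
    have hab' : ∀ i, a i ≤ b i := fun i => by have := hab i; linarith
    -- u : corner of K ; v : u pushed one step outside
    set u : X := b +ᵥ x₀ with hu
    set v : X := (b + e) +ᵥ x₀ with hv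
    have huK : u ∈ K := by
      rw [hKeq]; exact ⟨b, fun i => ⟨hab' i, le_refl _⟩, rfl⟩
    have hvu : e +ᵥ u = v := by rw [hu, hv, ← add_vadd, add_comm]
    have hvK : v ∉ K := by
      rw [hKeq]
      rintro ⟨δ, hδ, hvδ⟩
      have hbe : (b + e) +ᵥ x₀ = δ +ᵥ x₀ := by rw [← hv, hvδ]
      have : b + e = δ := hfree' _ _ _ hbe
      have hj : (b + e) j = δ j := by rw [this]
      have : b j + 1 = δ j := by simpa [e] using hj
      have := (hδ j).2
      omega
    -- v is in the orbit, hence covered by some piece L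
    obtain ⟨μ, huμ⟩ := hKorb huK
    obtain ⟨L, hL, hvL⟩ : ∃ L ∈ 𝓡, v ∈ L := by
      have : v = (e + μ) +ᵥ x := by rw [← hvu, huμ, ← add_vadd]
      rw [this]
      exact hcomp (e + μ)
    have hKL : K ≠ L := by
      intro h; rw [h] at hvK; exact hvK hvL
    rcases hnest K hK L hL with hdisj | hsub | hsub
    · -- disjoint case is impossible: boundaries at distance 1 ≤ q
      exfalso
      have huB : u ∈ actBdry n K := ⟨huK, e, esum, by rw [hvu]; exact hvK⟩
      have huL : u ∉ L := by
        intro h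
        have : u ∈ K ∩ L := ⟨huK, h⟩
        rw [hdisj] at this; exact this
      have hvB : v ∈ actBdry n L := by
        refine ⟨hvL, -e, nesum, ?_⟩
        have : (-e) +ᵥ v = u := by rw [← hvu, ← add_vadd]; simp
        rw [this]; exact huL
      have := hsep K hK L hL hKL u huB v hvB e hvu
      rw [esum] at this
      omega
    · exact ⟨L, hL, hsub, fun h => hvK (h hvL)⟩
    · exact absurd (hsub hvL) hvK
  constructor
  · -- part (a)
    intro γ
    intro hfin
    set y := γ +ᵥ x with hy
    have hyo : y ∈ orb := ⟨γ, rfl⟩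
    obtain ⟨K₀, hK₀, hyK₀⟩ := hcomp γ
    have hne : {K | K ∈ 𝓡 ∧ y ∈ K}.Nonempty := ⟨K₀, hK₀, hyK₀⟩
    obtain ⟨K, hKmem, hKmax⟩ := Set.Finite.exists_maximalFor id _ hfin hne
    obtain ⟨hK, hyK⟩ := hKmem
    obtain ⟨K', hK', hKK'⟩ := key K hK (horbK K hK y hyK hyo)
    have hyK' : y ∈ K' := hKK'.subset hyK
    have := hKmax (j := K') ⟨hK', hyK'⟩ hKK'.subset
    exact hKK'.2 this
  · -- part (b)
    intro K hK hKorb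
    exact key K hK hKorb
end

section
/- Let n ≥ 2, q ≥ 4, and let 𝓡 be a rectangular q-toast on ℤⁿ with associated labeling f_𝓡 : ℤⁿ → {R, B, G}. Let U := {x ∈ ℤⁿ : f_𝓡(x) = G and x ∉ ⋃𝓡}. Then U equals the set of points at ℓ¹-distance at least 2 from ⋃𝓡, and any two points of U are joined by a path in the grid graph Gₙ all of whose vertices lie in f_𝓡⁻¹(G). -/
/-- The outer boundary of `A ⊆ ℤⁿ`: points outside `A` at ℓ¹-distance 1 from `A`. -/
def gridOuterBoundary (n : ℕ) (A : Set (Fin n → ℤ)) : Set (Fin n → ℤ) :=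
  {x | x ∉ A ∧ ∃ y ∈ A, (∑ i, |x i - y i|) = 1}

namespace Stmt15

variable {n : ℕ}

def dist1 {n : ℕ} (x y : Fin n → ℤ) : ℤ := ∑ i, |x i - y i|

lemma dist1_nonneg (x y : Fin n → ℤ) : 0 ≤ dist1 x y :=
  Finset.sum_nonneg fun i _ => abs_nonneg _

lemma dist1_comm (x y : Fin n → ℤ) : dist1 x y = dist1 y x := by
  unfold dist1; exact Finset.sum_congr rfl fun i _ => abs_sub_comm _ _

lemma dist1_self (x : Fin n → ℤ) : dist1 x x = 0 := by
  unfold dist1; simp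

lemma dist1_triangle (x y z : Fin n → ℤ) : dist1 x z ≤ dist1 x y + dist1 y z := by
  unfold dist1; rw [← Finset.sum_add_distrib]
  exact Finset.sum_le_sum fun i _ => abs_sub_le _ _ _

lemma coord_le_dist1 (x y : Fin n → ℤ) (i : Fin n) : |x i - y i| ≤ dist1 x y := by
  unfold dist1
  exact Finset.single_le_sum (f := fun j => |x j - y j|) (fun j _ => abs_nonneg _)
    (Finset.mem_univ i)

lemma dist1_eq_zero {x y : Fin n → ℤ} (h : dist1 x y = 0) : x = y := by
  funext i
  have h1 := coord_le_dist1 x y i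
  have h2 := abs_nonneg (x i - y i)
  rw [h] at h1
  rw [abs_eq_max_neg] at h1 h2
  omega

/-- Paths in the grid graph with all vertices in `A`. -/
def Joined {n : ℕ} (A : Set (Fin n → ℤ)) (x y : Fin n → ℤ) : Prop :=
  ∃ (ℓ : ℕ) (p : ℕ → Fin n → ℤ), p 0 = x ∧ p ℓ = y ∧
    (∀ j < ℓ, dist1 (p j) (p (j+1)) = 1) ∧ ∀ j ≤ ℓ, p j ∈ A

lemma Joined.refl {A : Set (Fin n → ℤ)} {x : Fin n → ℤ} (hx : x ∈ A) : Joined A x x :=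
  ⟨0, fun _ => x, rfl, rfl, by omega, fun _ _ => hx⟩

lemma Joined.single {A : Set (Fin n → ℤ)} {x y : Fin n → ℤ} (hx : x ∈ A) (hy : y ∈ A)
    (hd : dist1 x y = 1) : Joined A x y := by
  refine ⟨1, fun j => if j = 0 then x else y, by simp, by simp, ?_, ?_⟩
  · intro j hj
    interval_cases j
    simpa using hd
  · intro j _
    by_cases h : j = 0 <;> simp [h, hx, hy]

lemma Joined.mono {A B : Set (Fin n → ℤ)} {x y : Fin n → ℤ} (h : Joined A x y)
    (hAB : A ⊆ B) : Joined B x y := by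
  obtain ⟨ℓ, p, h0, h1, h2, h3⟩ := h
  exact ⟨ℓ, p, h0, h1, h2, fun j hj => hAB (h3 j hj)⟩

lemma Joined.trans {A : Set (Fin n → ℤ)} {x y z : Fin n → ℤ} (h1 : Joined A x y)
    (h2 : Joined A y z) : Joined A x z := by
  obtain ⟨ℓ₁, p, hp0, hp1, hps, hpm⟩ := h1
  obtain ⟨ℓ₂, q, hq0, hq1, hqs, hqm⟩ := h2
  refine ⟨ℓ₁ + ℓ₂, fun j => if j ≤ ℓ₁ then p j else q (j - ℓ₁), by simp [hp0], ?_, ?_, ?_⟩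
  · by_cases h : ℓ₂ = 0
    · subst h; simpa [hp1, hq1.symm, hq0]
    · have : ¬ (ℓ₁ + ℓ₂ ≤ ℓ₁) := by omega
      simp only [this, if_false]
      rw [show ℓ₁ + ℓ₂ - ℓ₁ = ℓ₂ by omega, hq1]
  · intro j hj
    rcases lt_trichotomy j ℓ₁ with h | h | h
    · simp only [show j ≤ ℓ₁ by omega, if_true, show j + 1 ≤ ℓ₁ by omega, if_true]
      exact hps j h
    · subst h
      simp only [le_refl, if_true]
      by_cases h2 : j + 1 ≤ j
      · omega
      · simp only [h2, if_false, show j + 1 - j = 1 by omega]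
        rw [hp1, ← hq0]
        exact hqs 0 (by omega)
    · simp only [show ¬ (j ≤ ℓ₁) by omega, if_false, show ¬ (j + 1 ≤ ℓ₁) by omega, if_false,
        show j + 1 - ℓ₁ = (j - ℓ₁) + 1 by omega]
      exact hqs (j - ℓ₁) (by omega)
  · intro j hj
    by_cases h : j ≤ ℓ₁
    · simp only [h, if_true]; exact hpm j h
    · simp only [h, if_false]; exact hqm (j - ℓ₁) (by omega)

lemma Joined.symm {A : Set (Fin n → ℤ)} {x y : Fin n → ℤ} (h : Joined A x y) :
    Joined A y x := by
  obtain ⟨ℓ, p, h0, h1, h2, h3⟩ := h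
  refine ⟨ℓ, fun j => p (ℓ - j), by simp [h1], by simp [h0], ?_, fun j hj => h3 _ (by omega)⟩
  intro j hj
  simp only []
  rw [dist1_comm, show ℓ - j = (ℓ - (j+1)) + 1 by omega]
  exact h2 _ (by omega)




variable {n : ℕ}


lemma dist1_update (x : Fin n → ℤ) (i : Fin n) (v : ℤ) :
    dist1 x (Function.update x i v) = |x i - v| := by
  unfold dist1
  rw [Finset.sum_eq_single i]
  · simp
  · intro j _ hj; simp [Function.update_of_ne hj]
  · simp

/-- Betweenness: p is coordinatewise between x and y. -/
def Btw {n : ℕ} (x y p : Fin n → ℤ) : Prop :=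
  ∀ i, (x i ≤ p i ∧ p i ≤ y i) ∨ (y i ≤ p i ∧ p i ≤ x i)

lemma btw_self_left (x y : Fin n → ℤ) : Btw x y x := fun i => by omega

lemma btw_self_right (x y : Fin n → ℤ) : Btw x y y := fun i => by omega

/-- Staircase connectivity: if every point between x and y is in A, then x,y joined in A. -/
lemma stair (A : Set (Fin n → ℤ)) : ∀ (N : ℕ) (x y : Fin n → ℤ),
    (∑ i, (y i - x i).natAbs) = N → (∀ p, Btw x y p → p ∈ A) → Joined A x y := by
  intro N
  induction N using Nat.strong_induction_on with
  | _ N IH =>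
    intro x y hN h
    by_cases hxy : x = y
    · exact hxy ▸ Joined.refl (h x (btw_self_left x y))
    · have hne : ∃ i, x i ≠ y i := by
        by_contra hc
        push_neg at hc
        exact hxy (funext hc)
      obtain ⟨i, hi⟩ := hne
      set v : ℤ := if x i < y i then x i + 1 else x i - 1 with hv
      set x' := Function.update x i v with hx'
      have hstep : dist1 x x' = 1 := by
        rw [hx', dist1_update]
        rw [abs_eq_max_neg]; omega
      have hbtw' : ∀ p, Btw x' y p → Btw x y p := by
        intro p hp j
        have := hp j
        by_cases hji : j = i
        · subst hji
          simp only [hx', Function.update_self] at this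
          rcases this with h1 | h1 <;> omega
        · simpa [hx', Function.update_of_ne hji] using this
      have hxbtw : Btw x y x' := by
        intro j
        by_cases hji : j = i
        · subst hji; simp only [hx', Function.update_self]; omega
        · simp [hx', Function.update_of_ne hji]; omega
      have hmeas : (∑ j, (y j - x' j).natAbs) < N := by
        subst hN
        have key : ∀ z : Fin n → ℤ, (∑ j, (y j - z j).natAbs)
            = (y i - z i).natAbs + ∑ j ∈ Finset.univ.erase i, (y j - z j).natAbs :=
          fun z => (Finset.add_sum_erase _ (fun j => (y j - z j).natAbs)
            (Finset.mem_univ i)).symm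
        rw [key x', key x]
        have heq : (∑ j ∈ Finset.univ.erase i, (y j - x' j).natAbs)
            = ∑ j ∈ Finset.univ.erase i, (y j - x j).natAbs := by
          refine Finset.sum_congr rfl fun j hj => ?_
          rw [hx', Function.update_of_ne (Finset.ne_of_mem_erase hj)]
        rw [heq]
        have : x' i = v := by rw [hx']; simp
        rw [this]
        omega
      have hrec := IH _ hmeas x' y rfl (fun p hp => h p (hbtw' p hp))
      exact (Joined.single (h x (btw_self_left x y)) (h x' hxbtw) hstep).trans hrec




section Box

variable (a b : Fin n → ℤ)

/-- per-coordinate deviation from the interval [a i, b i] -/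
def dvv (i : Fin n) (v : ℤ) : ℤ := max (a i - v) (max (v - b i) 0)

/-- ℓ¹ distance from x to the box [a,b] -/
def ds (x : Fin n → ℤ) : ℤ := ∑ i, dvv a b i (x i)

def box : Set (Fin n → ℤ) := {x | ∀ i, a i ≤ x i ∧ x i ≤ b i}

def clamp (x : Fin n → ℤ) : Fin n → ℤ := fun i => min (max (x i) (a i)) (b i)

lemma dvv_nonneg (i : Fin n) (v : ℤ) : 0 ≤ dvv a b i v := by unfold dvv; omega

lemma ds_nonneg (x : Fin n → ℤ) : 0 ≤ ds a b x :=
  Finset.sum_nonneg fun i _ => dvv_nonneg a b i _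

variable {a b}

lemma clamp_mem (hab : ∀ i, a i ≤ b i) (x : Fin n → ℤ) : clamp a b x ∈ box a b := by
  intro i
  have := hab i
  unfold clamp
  omega

lemma dist1_clamp (hab : ∀ i, a i ≤ b i) (x : Fin n → ℤ) : dist1 x (clamp a b x) = ds a b x := by
  unfold dist1 ds clamp dvv
  refine Finset.sum_congr rfl fun i _ => ?_
  have := hab i
  rw [abs_eq_max_neg]
  omega

lemma ds_le_dist1 (x : Fin n → ℤ) {y : Fin n → ℤ} (hy : y ∈ box a b) :
    ds a b x ≤ dist1 x y := by
  unfold ds dist1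
  refine Finset.sum_le_sum fun i _ => ?_
  have := hy i
  unfold dvv
  rw [abs_eq_max_neg]
  omega

lemma mem_box_iff (x : Fin n → ℤ) : x ∈ box a b ↔ ds a b x = 0 := by
  constructor
  · intro h
    unfold ds
    refine Finset.sum_eq_zero fun i _ => ?_
    have := h i
    unfold dvv
    omega
  · intro h i
    have h1 : dvv a b i (x i) = 0 := by
      by_contra hc
      have hpos : 0 < dvv a b i (x i) := lt_of_le_of_ne (dvv_nonneg a b i _) (Ne.symm hc)
      have hrest : 0 ≤ ∑ j ∈ Finset.univ.erase i, dvv a b j (x j) :=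
        Finset.sum_nonneg fun j _ => dvv_nonneg a b j _
      have := (Finset.add_sum_erase _ (fun j => dvv a b j (x j)) (Finset.mem_univ i)).symm
      unfold ds at h
      omega
    unfold dvv at h1
    omega

lemma ds_lipschitz (x y : Fin n → ℤ) : |ds a b x - ds a b y| ≤ dist1 x y := by
  unfold ds dist1
  rw [← Finset.sum_sub_distrib]
  refine le_trans (Finset.abs_sum_le_sum_abs _ _) (Finset.sum_le_sum fun i _ => ?_)
  unfold dvv
  rw [abs_eq_max_neg, abs_eq_max_neg]
  omega

lemma ds_update (x : Fin n → ℤ) (i : Fin n) (v : ℤ) :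
    ds a b (Function.update x i v) = ds a b x - dvv a b i (x i) + dvv a b i v := by
  unfold ds
  rw [← Finset.add_sum_erase _ _ (Finset.mem_univ i),
      ← Finset.add_sum_erase _ (fun j => dvv a b j (x j)) (Finset.mem_univ i)]
  have : (∑ j ∈ Finset.univ.erase i, dvv a b j (Function.update x i v j))
      = ∑ j ∈ Finset.univ.erase i, dvv a b j (x j) := by
    refine Finset.sum_congr rfl fun j hj => ?_
    rw [Function.update_of_ne (Finset.ne_of_mem_erase hj)]
  rw [this, Function.update_self]
  ring

/-- the clamp of a point outside the box is an inner boundary point of the box -/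
lemma clamp_boundary (hab : ∀ i, a i ≤ b i) (x : Fin n → ℤ) (hx : x ∉ box a b) :
    clamp a b x ∈ gridBoundary n (box a b) := by
  refine ⟨clamp_mem hab x, ?_⟩
  have : ∃ i, ¬ (a i ≤ x i ∧ x i ≤ b i) := by
    by_contra hc; push_neg at hc
    exact hx fun i => ⟨(hc i).1, (hc i).2⟩
  obtain ⟨i, hi⟩ := this
  by_cases hlow : x i < a i
  · refine ⟨Function.update (clamp a b x) i (a i - 1), fun hmem => ?_, ?_⟩
    · have := hmem i
      rw [Function.update_self] at this
      omega
    · have : dist1 (clamp a b x) (Function.update (clamp a b x) i (a i - 1)) = 1 := by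
        rw [dist1_update]
        have := hab i
        unfold clamp
        rw [abs_eq_max_neg]
        omega
      exact this
  · have hhigh : b i < x i := by omega
    refine ⟨Function.update (clamp a b x) i (b i + 1), fun hmem => ?_, ?_⟩
    · have := hmem i
      rw [Function.update_self] at this
      omega
    · have : dist1 (clamp a b x) (Function.update (clamp a b x) i (b i + 1)) = 1 := by
        rw [dist1_update]
        have := hab i
        unfold clamp
        rw [abs_eq_max_neg]
        omega
      exact this

end Box


section Shell

variable {a b : Fin n → ℤ}

/-- The shell around the box: points at ℓ¹ distance 2 or 3. -/
def Sh (a b : Fin n → ℤ) : Set (Fin n → ℤ) := {x | ds a b x = 2 ∨ ds a b x = 3}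

/-- A face point: deviates by exactly 2 in coordinate i (side σ), inside elsewhere. -/
def Face (a b : Fin n → ℤ) (i : Fin n) (σ : Bool) (z : Fin n → ℤ) : Prop :=
  z i = (if σ then b i + 2 else a i - 2) ∧ ∀ j, j ≠ i → a j ≤ z j ∧ z j ≤ b j

lemma ds_face (hab4 : ∀ i, a i + 4 ≤ b i) {i : Fin n} {σ : Bool} {z : Fin n → ℤ}
    (hz : Face a b i σ z) : ds a b z = 2 := by
  unfold ds
  rw [Finset.sum_eq_single i]
  · have h4 := hab4 i
    have h1 := hz.1
    unfold dvv
    cases σ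
    · simp only [if_neg Bool.false_ne_true] at h1
      omega
    · simp only [if_pos rfl] at h1
      omega
  · intro j _ hj
    have := hz.2 j hj
    unfold dvv
    omega
  · simp

lemma face_mem_Sh (hab4 : ∀ i, a i + 4 ≤ b i) {i : Fin n} {σ : Bool} {z : Fin n → ℤ}
    (hz : Face a b i σ z) : z ∈ Sh a b := Or.inl (ds_face hab4 hz)

/-- filter of deviating coordinates -/
noncomputable def devset (a b : Fin n → ℤ) (x : Fin n → ℤ) : Finset (Fin n) :=
  (Finset.univ.filter fun i => dvv a b i (x i) ≠ 0)

lemma mem_devset {x : Fin n → ℤ} {i : Fin n} : i ∈ devset a b x ↔ dvv a b i (x i) ≠ 0 := by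
  unfold devset; simp

lemma devset_update_zero {x : Fin n → ℤ} {j : Fin n} {v : ℤ} (h : dvv a b j v = 0) :
    devset a b (Function.update x j v) = (devset a b x).erase j := by
  ext j'
  by_cases hj : j' = j
  · subst hj
    simp [mem_devset, Function.update_self, h]
  · simp [mem_devset, Function.update_of_ne hj, Finset.mem_erase, hj]

lemma devset_update_ne {x : Fin n → ℤ} {j : Fin n} {v : ℤ} (h : dvv a b j v ≠ 0)
    (h2 : dvv a b j (x j) ≠ 0) :
    devset a b (Function.update x j v) = devset a b x := by
  ext j'
  by_cases hj : j' = j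
  · subst hj
    simp [mem_devset, Function.update_self, h, h2]
  · simp [mem_devset, Function.update_of_ne hj]

lemma ds_eq_devsum (x : Fin n → ℤ) : ds a b x = ∑ i ∈ devset a b x, dvv a b i (x i) := by
  unfold ds devset
  rw [Finset.sum_filter_of_ne]
  intro i _ h
  intro hc
  exact (h hc).elim

/-- Every shell point can be moved (within the shell) to a face point. -/
lemma toFace (hab4 : ∀ i, a i + 4 ≤ b i) : ∀ (N : ℕ) (x : Fin n → ℤ), x ∈ Sh a b →
    (devset a b x).card = N →
    ∃ i σ z, Face a b i σ z ∧ Joined (Sh a b) x z := by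
  intro N
  induction N using Nat.strong_induction_on with
  | _ N IH =>
    intro x hx hN
    rcases Nat.lt_or_ge N 2 with hN2 | hN2
    · -- N = 0 or 1
      match N, hN with
      | 0, hN =>
        exfalso
        have : devset a b x = ∅ := Finset.card_eq_zero.mp hN
        have hz : ds a b x = 0 := by
          rw [ds_eq_devsum, this]
          simp
        rcases hx with h | h <;> omega
      | 1, hN =>
        obtain ⟨i, hi⟩ := Finset.card_eq_one.mp hN
        have hds : ds a b x = dvv a b i (x i) := by
          rw [ds_eq_devsum, hi, Finset.sum_singleton]
        have hnz : dvv a b i (x i) ≠ 0 := by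
          have : i ∈ devset a b x := by rw [hi]; exact Finset.mem_singleton_self i
          exact mem_devset.mp this
        have hmem : ∀ j, j ≠ i → a j ≤ x j ∧ x j ≤ b j := by
          intro j hj
          have : j ∉ devset a b x := by rw [hi]; simpa using hj
          have h0 : dvv a b j (x j) = 0 := by
            by_contra hc; exact this (mem_devset.mpr hc)
          unfold dvv at h0
          omega
        have hab := hab4 i
        have hcases : a i - x i = dvv a b i (x i) ∨ x i - b i = dvv a b i (x i) := by
          unfold dvv at hnz ⊢
          omega
        have hxmem := hx
        rcases hx with h2 | h3
        · -- ds = 2 : already a face point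
          rw [hds] at h2
          rcases hcases with h | h <;> rw [h2] at h
          · exact ⟨i, false, x, ⟨by simp; omega, hmem⟩, Joined.refl hxmem⟩
          · exact ⟨i, true, x, ⟨by simp; omega, hmem⟩, Joined.refl hxmem⟩
        · -- ds = 3 : move one step in
          rw [hds] at h3
          have hlh : x i < a i ∨ b i < x i := by unfold dvv at hnz; omega
          have h3' : a i - x i = 3 ∨ x i - b i = 3 := by unfold dvv at h3; omega
          set v : ℤ := if x i < a i then x i + 1 else x i - 1 with hv
          have hdvv : dvv a b i v = 2 := by
            unfold dvv at h3 ⊢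
            by_cases h : x i < a i
            · rw [hv, if_pos h]; omega
            · rw [hv, if_neg h]; omega
          set z := Function.update x i v with hz
          have hdsz : ds a b z = 2 := by
            rw [hz, ds_update]; omega
          have hstep : dist1 x z = 1 := by
            rw [hz, dist1_update, abs_eq_max_neg, hv]
            by_cases h : x i < a i
            · rw [if_pos h]; omega
            · rw [if_neg h]; omega
          have hzj : ∀ j, j ≠ i → a j ≤ z j ∧ z j ≤ b j := by
            intro j hj; rw [hz, Function.update_of_ne hj]; exact hmem j hj
          have hjoin := Joined.single hxmem (Or.inl hdsz) hstep
          have hziv : z i = v := by rw [hz, Function.update_self]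
          rcases h3' with h | h
          · refine ⟨i, false, z, ⟨?_, hzj⟩, hjoin⟩
            rw [hziv, hv, if_pos (by omega : x i < a i)]
            simp
            omega
          · refine ⟨i, true, z, ⟨?_, hzj⟩, hjoin⟩
            rw [hziv, hv, if_neg (by omega : ¬ x i < a i)]
            simp
            omega
    · -- N ≥ 2 : two deviating coordinates, reduce their number
      have h1lt : 1 < (devset a b x).card := by omega
      obtain ⟨i0, hi0, j0, hj0, hij0⟩ := Finset.one_lt_card.mp h1lt
      have hds3 : ds a b x ≤ 3 := by rcases hx with h | h <;> omega
      have hsumle0 : ∀ i j : Fin n, i ≠ j → dvv a b i (x i) + dvv a b j (x j) ≤ ds a b x := by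
        intro i j hij
        have hsub : ({i, j} : Finset (Fin n)) ⊆ Finset.univ := Finset.subset_univ _
        have := Finset.sum_le_sum_of_subset_of_nonneg hsub
          (fun k _ _ => dvv_nonneg a b k (x k))
        rw [Finset.sum_pair hij] at this
        exact this
      have hswap : ∃ i j : Fin n, i ≠ j ∧ dvv a b i (x i) ≠ 0 ∧ dvv a b j (x j) = 1
          ∧ j ∈ devset a b x := by
        have hi' := mem_devset.mp hi0
        have hj' := mem_devset.mp hj0
        have hipos : 0 < dvv a b i0 (x i0) := lt_of_le_of_ne (dvv_nonneg a b i0 _) (Ne.symm hi')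
        have hjpos : 0 < dvv a b j0 (x j0) := lt_of_le_of_ne (dvv_nonneg a b j0 _) (Ne.symm hj')
        have hsl := hsumle0 i0 j0 hij0
        by_cases h : dvv a b j0 (x j0) = 1
        · exact ⟨i0, j0, hij0, hi', h, hj0⟩
        · refine ⟨j0, i0, hij0.symm, hj', by omega, hi0⟩
      obtain ⟨i, j, hij, hi', hj1, hjmem⟩ := hswap
      have habi := hab4 i
      have habj := hab4 j
      set w : ℤ := if x j < a j then x j + 1 else x j - 1 with hw
      have hw0 : dvv a b j w = 0 := by
        unfold dvv at hj1 ⊢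
        by_cases h : x j < a j
        · rw [hw, if_pos h]; omega
        · rw [hw, if_neg h]; omega
      have hwd : |x j - w| = 1 := by
        rw [abs_eq_max_neg]
        by_cases h : x j < a j
        · rw [hw, if_pos h]; omega
        · rw [hw, if_neg h]; omega
      rcases hx with h2 | h3
      · -- ds = 2 : push i outward first, then pull j inward
        have hii1 : dvv a b i (x i) = 1 := by
          have := hsumle0 i j hij
          have := dvv_nonneg a b i (x i)
          omega
        set u : ℤ := if x i < a i then x i - 1 else x i + 1 with hu
        have hu2 : dvv a b i u = 2 := by
          unfold dvv at hii1 ⊢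
          by_cases h : x i < a i
          · rw [hu, if_pos h]; omega
          · rw [hu, if_neg h]; omega
        have hud : |x i - u| = 1 := by
          rw [abs_eq_max_neg]
          by_cases h : x i < a i
          · rw [hu, if_pos h]; omega
          · rw [hu, if_neg h]; omega
        set z1 := Function.update x i u with hz1
        have hdsz1 : ds a b z1 = 3 := by
          rw [hz1, ds_update, h2, hii1, hu2]; norm_num
        have hstep1 : dist1 x z1 = 1 := by rw [hz1, dist1_update, hud]
        have hz1j : z1 j = x j := by rw [hz1, Function.update_of_ne hij.symm]
        set z2 := Function.update z1 j w with hz2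
        have hdsz2 : ds a b z2 = 2 := by
          rw [hz2, ds_update, hdsz1, hz1j, hj1, hw0]; norm_num
        have hstep2 : dist1 z1 z2 = 1 := by rw [hz2, dist1_update, hz1j, hwd]
        have hdev1 : devset a b z1 = devset a b x := by
          rw [hz1]
          exact devset_update_ne (by omega) hi'
        have hdev2 : (devset a b z2).card = N - 1 := by
          have : devset a b z2 = (devset a b z1).erase j := by
            rw [hz2]
            exact devset_update_zero hw0
          rw [this, hdev1, Finset.card_erase_of_mem hjmem, hN]
        obtain ⟨i', σ', zf, hface, hjoin⟩ := IH (N - 1) (by omega) z2 (Or.inl hdsz2) hdev2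
        refine ⟨i', σ', zf, hface, ?_⟩
        exact ((Joined.single (Or.inl h2) (Or.inr hdsz1) hstep1).trans
          (Joined.single (Or.inr hdsz1) (Or.inl hdsz2) hstep2)).trans hjoin
      · -- ds = 3 : pull j inward
        set z := Function.update x j w with hz
        have hdsz : ds a b z = 2 := by
          rw [hz, ds_update, h3, hj1, hw0]; norm_num
        have hstep : dist1 x z = 1 := by rw [hz, dist1_update, hwd]
        have hdev : (devset a b z).card = N - 1 := by
          have : devset a b z = (devset a b x).erase j := by
            rw [hz]; exact devset_update_zero hw0
          rw [this, Finset.card_erase_of_mem hjmem, hN]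
        obtain ⟨i', σ', zf, hface, hjoin⟩ := IH (N - 1) (by omega) z (Or.inl hdsz) hdev
        exact ⟨i', σ', zf, hface, (Joined.single (Or.inr h3) (Or.inl hdsz) hstep).trans hjoin⟩

/-- The standard point of a face. -/
def stdF (a b : Fin n → ℤ) (i : Fin n) (σ : Bool) : Fin n → ℤ :=
  Function.update a i (if σ then b i + 2 else a i - 2)

lemma face_stdF (hab4 : ∀ i, a i + 4 ≤ b i) (i : Fin n) (σ : Bool) :
    Face a b i σ (stdF a b i σ) := by
  constructor
  · rw [stdF, Function.update_self]
  · intro j hj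
    rw [stdF, Function.update_of_ne hj]
    have := hab4 j
    omega

lemma face_to_std (hab4 : ∀ i, a i + 4 ≤ b i) {i : Fin n} {σ : Bool} {z : Fin n → ℤ}
    (hz : Face a b i σ z) : Joined (Sh a b) z (stdF a b i σ) := by
  refine stair _ _ z (stdF a b i σ) rfl ?_
  intro p hp
  refine face_mem_Sh hab4 (i := i) (σ := σ) ⟨?_, ?_⟩
  · have := hp i
    rw [stdF, Function.update_self, hz.1] at this
    omega
  · intro j hj
    have := hp j
    rw [stdF, Function.update_of_ne hj] at this
    have h2 := hz.2 j hj
    have := hab4 j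
    omega

/-- Edge move between standard points of different faces. -/
lemma edge_move (hab4 : ∀ i, a i + 4 ≤ b i) {i j : Fin n} (hij : i ≠ j) (σ : Bool) :
    Joined (Sh a b) (stdF a b i σ) (stdF a b j false) := by
  have habi := hab4 i
  have habj := hab4 j
  set v : ℤ := if σ then b i + 2 else a i - 2 with hv
  set w1 : ℤ := if σ then b i + 1 else a i - 1 with hw1
  set w0 : ℤ := if σ then b i else a i with hw0
  set z0 := stdF a b i σ with hz0
  set z1 := Function.update z0 j (a j - 1) with hz1
  set z2 := Function.update z1 i w1 with hz2
  set z3 := Function.update z2 j (a j - 2) with hz3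
  set z4 := Function.update z3 i w0 with hz4
  have hz0i : z0 i = v := by rw [hz0, stdF, Function.update_self]
  have hz0j : z0 j = a j := by rw [hz0, stdF, Function.update_of_ne hij.symm]
  have hz1i : z1 i = v := by rw [hz1, Function.update_of_ne hij, hz0i]
  have hz1j : z1 j = a j - 1 := by rw [hz1, Function.update_self]
  have hz2i : z2 i = w1 := by rw [hz2, Function.update_self]
  have hz2j : z2 j = a j - 1 := by rw [hz2, Function.update_of_ne hij.symm, hz1j]
  have hz3i : z3 i = w1 := by rw [hz3, Function.update_of_ne hij, hz2i]
  have hz3j : z3 j = a j - 2 := by rw [hz3, Function.update_self]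
  have hz4i : z4 i = w0 := by rw [hz4, Function.update_self]
  have hz4j : z4 j = a j - 2 := by rw [hz4, Function.update_of_ne hij.symm, hz3j]
  have hdv_v : dvv a b i v = 2 := by unfold dvv; rw [hv]; cases σ <;> simp <;> omega
  have hdv_w1 : dvv a b i w1 = 1 := by unfold dvv; rw [hw1]; cases σ <;> simp <;> omega
  have hdv_w0 : dvv a b i w0 = 0 := by unfold dvv; rw [hw0]; cases σ <;> simp <;> omega
  have hds0 : ds a b z0 = 2 := ds_face hab4 (face_stdF hab4 i σ)
  have hds1 : ds a b z1 = 3 := by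
    rw [hz1, ds_update, hds0, hz0j]
    unfold dvv; omega
  have hds2 : ds a b z2 = 2 := by
    rw [hz2, ds_update, hds1, hz1i, hdv_v, hdv_w1]; norm_num
  have hds3 : ds a b z3 = 3 := by
    rw [hz3, ds_update, hds2, hz2j]
    unfold dvv; omega
  have hds4 : ds a b z4 = 2 := by
    rw [hz4, ds_update, hds3, hz3i, hdv_w1, hdv_w0]; norm_num
  have hst1 : dist1 z0 z1 = 1 := by
    rw [hz1, dist1_update, hz0j, abs_eq_max_neg]; omega
  have hst2 : dist1 z1 z2 = 1 := by
    rw [hz2, dist1_update, hz1i, abs_eq_max_neg, hv, hw1]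
    cases σ <;> simp <;> omega
  have hst3 : dist1 z2 z3 = 1 := by
    rw [hz3, dist1_update, hz2j, abs_eq_max_neg]; omega
  have hst4 : dist1 z3 z4 = 1 := by
    rw [hz4, dist1_update, hz3i, abs_eq_max_neg, hw1, hw0]
    cases σ <;> simp <;> omega
  have hface4 : Face a b j false z4 := by
    constructor
    · rw [hz4j]; simp
    · intro l hl
      by_cases hli : l = i
      · subst hli
        rw [hz4i, hw0]
        cases σ <;> simp <;> omega
      · have : z4 l = a l := by
          rw [hz4, Function.update_of_ne hli, hz3, Function.update_of_ne hl,
            hz2, Function.update_of_ne hli, hz1, Function.update_of_ne hl,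
            hz0, stdF, Function.update_of_ne hli]
        rw [this]
        have := hab4 l
        omega
  have m0 : z0 ∈ Sh a b := Or.inl hds0
  have m1 : z1 ∈ Sh a b := Or.inr hds1
  have m2 : z2 ∈ Sh a b := Or.inl hds2
  have m3 : z3 ∈ Sh a b := Or.inr hds3
  have m4 : z4 ∈ Sh a b := Or.inl hds4
  have j1 := Joined.single m0 m1 hst1
  have j2 := Joined.single m1 m2 hst2
  have j3 := Joined.single m2 m3 hst3
  have j4 := Joined.single m3 m4 hst4
  exact (((j1.trans j2).trans j3).trans j4).trans (face_to_std hab4 hface4)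

/-- The shell of a box is grid-connected. -/
lemma sh_connected (hn : 2 ≤ n) (hab4 : ∀ i, a i + 4 ≤ b i) {x y : Fin n → ℤ}
    (hx : x ∈ Sh a b) (hy : y ∈ Sh a b) : Joined (Sh a b) x y := by
  set i0 : Fin n := ⟨0, by omega⟩ with hi0
  set i1 : Fin n := ⟨1, by omega⟩ with hi1
  have h01 : i0 ≠ i1 := by
    rw [hi0, hi1]
    intro h
    exact absurd (congrArg Fin.val h) (by norm_num)
  have to_std0 : ∀ (i : Fin n) (σ : Bool), Joined (Sh a b) (stdF a b i σ) (stdF a b i0 false) := by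
    intro i σ
    by_cases h : i = i0
    · subst h
      cases σ
      · exact Joined.refl (face_mem_Sh hab4 (face_stdF hab4 _ false))
      · exact (edge_move hab4 h01 true).trans (edge_move hab4 h01.symm false)
    · exact edge_move hab4 h σ
  obtain ⟨ix, σx, zx, hfx, hjx⟩ := toFace hab4 _ x hx rfl
  obtain ⟨iy, σy, zy, hfy, hjy⟩ := toFace hab4 _ y hy rfl
  exact ((hjx.trans ((face_to_std hab4 hfx).trans (to_std0 ix σx)))).trans
    ((hjy.trans ((face_to_std hab4 hfy).trans (to_std0 iy σy)))).symm

end Shell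


section Surgery

variable {a b : Fin n → ℤ}

/-- Path surgery: reroute a path around the box [a,b] through its shell. -/
lemma surgery (hn : 2 ≤ n) (hab4 : ∀ i, a i + 4 ≤ b i) (A : Set (Fin n → ℤ)) :
    ∀ (ℓ : ℕ) (x y : Fin n → ℤ) (p : ℕ → Fin n → ℤ),
    p 0 = x → p ℓ = y → (∀ j < ℓ, dist1 (p j) (p (j+1)) = 1) → (∀ j ≤ ℓ, p j ∈ A) →
    2 ≤ ds a b x → 2 ≤ ds a b y →
    Joined ((A ∩ {z | 2 ≤ ds a b z}) ∪ Sh a b) x y := by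
  intro ℓ
  induction ℓ using Nat.strong_induction_on with
  | _ ℓ IH =>
    intro x y p h0 hl hst hmem hx hy
    have hxT : x ∈ (A ∩ {z | 2 ≤ ds a b z}) ∪ Sh a b :=
      Or.inl ⟨h0 ▸ hmem 0 (Nat.zero_le ℓ), hx⟩
    rcases Nat.eq_zero_or_pos ℓ with hz | hpos
    · subst hz
      rw [← h0, hl] at hxT ⊢
      rw [← hl, h0]
      exact h0 ▸ hl ▸ Joined.refl hxT
    · by_cases h1 : 2 ≤ ds a b (p 1)
      · have hp1A : p 1 ∈ A := hmem 1 hpos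
        have hstep : dist1 x (p 1) = 1 := h0 ▸ hst 0 hpos
        have hsingle : Joined ((A ∩ {z | 2 ≤ ds a b z}) ∪ Sh a b) x (p 1) :=
          Joined.single hxT (Or.inl ⟨hp1A, h1⟩) hstep
        have htail := IH (ℓ - 1) (by omega) (p 1) y (fun m => p (m + 1)) rfl
          (by show p (ℓ - 1 + 1) = y; rw [show ℓ - 1 + 1 = ℓ by omega]; exact hl)
          (fun j hj => hst (j + 1) (by omega))
          (fun j hj => hmem (j + 1) (by omega)) h1 hy
        exact hsingle.trans htail
      · -- x is on the shell; find the re-entry point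
        have hlip : ∀ j, j < ℓ → |ds a b (p j) - ds a b (p (j+1))| ≤ 1 := by
          intro j hj
          have := ds_lipschitz (a := a) (b := b) (p j) (p (j+1))
          rw [hst j hj] at this
          exact this
        have hx2 : ds a b x = 2 := by
          have h5 := hlip 0 hpos
          rw [Nat.zero_add, h0, abs_eq_max_neg] at h5
          omega
        have hexists : ∃ k, 2 ≤ ds a b (p (k+1)) ∧ k + 1 ≤ ℓ :=
          ⟨ℓ - 1, by rw [show ℓ - 1 + 1 = ℓ by omega, hl]; exact hy, by omega⟩
        classical
        set k := Nat.find hexists with hkdef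
        obtain ⟨hk1, hk2⟩ := Nat.find_spec hexists
        rw [← hkdef] at hk1 hk2
        have hk0 : k ≠ 0 := by
          intro h
          rw [h] at hk1
          exact h1 hk1
        have hprev : ds a b (p k) ≤ 1 := by
          by_contra hc
          push_neg at hc
          have hmin := Nat.find_min hexists (m := k - 1) (by omega)
          rw [show k - 1 + 1 = k by omega] at hmin
          exact hmin ⟨by omega, by omega⟩
        have hds_k1 : ds a b (p (k+1)) = 2 := by
          have := hlip k (by omega)
          rw [abs_eq_max_neg] at this
          omega
        have hshell : Joined (Sh a b) x (p (k+1)) :=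
          sh_connected hn hab4 (Or.inl hx2) (Or.inl hds_k1)
        have htail := IH (ℓ - (k+1)) (by omega) (p (k+1)) y (fun m => p (k + 1 + m))
          (by show p (k + 1 + 0) = p (k+1); rw [Nat.add_zero])
          (by show p (k + 1 + (ℓ - (k+1))) = y; rw [show k + 1 + (ℓ - (k+1)) = ℓ by omega]; exact hl)
          (fun j hj => by
            show dist1 (p (k + 1 + j)) (p (k + 1 + (j + 1))) = 1
            rw [show k + 1 + (j + 1) = (k + 1 + j) + 1 by omega]
            exact hst (k + 1 + j) (by omega))
          (fun j hj => hmem (k + 1 + j) (by omega)) (by omega) hy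
        exact (hshell.mono Set.subset_union_right).trans htail

end Surgery

lemma dist1_update_right (u z : Fin n → ℤ) (i : Fin n) (v : ℤ) :
    dist1 u (Function.update z i v) = dist1 u z - |u i - z i| + |u i - v| := by
  unfold dist1
  rw [← Finset.add_sum_erase _ _ (Finset.mem_univ i),
      ← Finset.add_sum_erase _ (fun j => |u j - z j|) (Finset.mem_univ i)]
  have : (∑ j ∈ Finset.univ.erase i, |u j - Function.update z i v j|)
      = ∑ j ∈ Finset.univ.erase i, |u j - z j| := by
    refine Finset.sum_congr rfl fun j hj => ?_
    rw [Function.update_of_ne (Finset.ne_of_mem_erase hj)]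
  rw [this, Function.update_self]
  ring

/-- Crossing lemma: walking from `u ∉ L` to `z ∈ L` meets the boundary of `L`
at distance at most `dist1 u z` from `u`. -/
lemma crossing (L : Set (Fin n → ℤ)) : ∀ (N : ℕ) (u z : Fin n → ℤ), u ∉ L → z ∈ L →
    (∑ i, (u i - z i).natAbs) = N → ∃ w ∈ gridBoundary n L, dist1 u w ≤ dist1 u z := by
  intro N
  induction N using Nat.strong_induction_on with
  | _ N IH =>
    intro u z hu hz hN
    have hne : u ≠ z := fun h => hu (h ▸ hz)
    have hex : ∃ i, u i ≠ z i := by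
      by_contra hc
      push_neg at hc
      exact hne (funext hc)
    obtain ⟨i, hi⟩ := hex
    set v : ℤ := if u i < z i then z i - 1 else z i + 1 with hv
    set z' := Function.update z i v with hz'
    have hdz : dist1 z z' = 1 := by
      rw [hz', dist1_update, hv, abs_eq_max_neg]
      by_cases h : u i < z i
      · rw [if_pos h]; omega
      · rw [if_neg h]; omega
    have hdu : dist1 u z' = dist1 u z - 1 := by
      rw [hz', dist1_update_right, hv]
      rw [abs_eq_max_neg, abs_eq_max_neg]
      by_cases h : u i < z i
      · rw [if_pos h]; omega
      · rw [if_neg h]; omega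
    by_cases hz'L : z' ∈ L
    · have hmeas : (∑ j, (u j - z' j).natAbs) < N := by
        subst hN
        have key : ∀ w : Fin n → ℤ, (∑ j, (u j - w j).natAbs)
            = (u i - w i).natAbs + ∑ j ∈ Finset.univ.erase i, (u j - w j).natAbs :=
          fun w => (Finset.add_sum_erase _ (fun j => (u j - w j).natAbs)
            (Finset.mem_univ i)).symm
        rw [key z', key z]
        have heq : (∑ j ∈ Finset.univ.erase i, (u j - z' j).natAbs)
            = ∑ j ∈ Finset.univ.erase i, (u j - z j).natAbs := by
          refine Finset.sum_congr rfl fun j hj => ?_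
          rw [hz', Function.update_of_ne (Finset.ne_of_mem_erase hj)]
        rw [heq]
        have : z' i = v := by rw [hz']; simp
        rw [this, hv]
        by_cases h : u i < z i
        · rw [if_pos h]; omega
        · rw [if_neg h]; omega
      obtain ⟨w, hw1, hw2⟩ := IH _ hmeas u z' hu hz'L rfl
      exact ⟨w, hw1, by omega⟩
    · refine ⟨z, ⟨hz, z', hz'L, ?_⟩, le_refl _⟩
      have := hdz
      unfold dist1 at this
      exact this

/-- ℓ¹ balls are finite. -/
lemma ball_finite (x : Fin n → ℤ) (r : ℤ) : {p : Fin n → ℤ | dist1 x p ≤ r}.Finite := by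
  refine Set.Finite.subset (Set.Finite.pi (t := fun i => Set.Icc (x i - r) (x i + r))
    (fun i => Set.finite_Icc _ _)) ?_
  intro p hp
  rw [Set.mem_pi]
  intro i _
  have h1 := coord_le_dist1 x p i
  have h2 : dist1 x p ≤ r := hp
  rw [abs_eq_max_neg] at h1
  simp only [Set.mem_Icc]
  omega

/-- Main connectivity lemma: points far from all rectangles are joined avoiding
the 1-neighborhood of every rectangle. -/
lemma main_conn (n q : ℕ) (hn : 2 ≤ n) (hq : 4 ≤ q) (𝓡 : Set (Set (Fin n → ℤ)))
    (hrect : ∀ K ∈ 𝓡, ∃ a b : Fin n → ℤ, (∀ i, (q : ℤ) ≤ b i - a i) ∧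
      K = {x | ∀ i, a i ≤ x i ∧ x i ≤ b i})
    (hsep : ∀ K ∈ 𝓡, ∀ L ∈ 𝓡, K ≠ L →
      ∀ u ∈ gridBoundary n K, ∀ v ∈ gridBoundary n L, (q : ℤ) < ∑ i, |u i - v i|)
    (hnest : ∀ K ∈ 𝓡, ∀ L ∈ 𝓡, K ∩ L = ∅ ∨ K ⊆ L ∨ L ⊆ K)
    (x y : Fin n → ℤ)
    (hx : ∀ K ∈ 𝓡, ∀ z ∈ K, 2 ≤ dist1 x z) (hy : ∀ K ∈ 𝓡, ∀ z ∈ K, 2 ≤ dist1 y z) :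
    Joined {p | ∀ K ∈ 𝓡, ∀ z ∈ K, 2 ≤ dist1 p z} x y := by
  classical
  choose! aa bb hsize hbox using hrect
  have hq4 : (4 : ℤ) ≤ (q : ℤ) := by exact_mod_cast hq
  have hab4 : ∀ K ∈ 𝓡, ∀ i, aa K i + 4 ≤ bb K i := fun K hK i => by
    have := hsize K hK i; omega
  have habK : ∀ K ∈ 𝓡, ∀ i, aa K i ≤ bb K i := fun K hK i => by
    have := hab4 K hK i; omega
  have hboxK : ∀ K ∈ 𝓡, K = box (aa K) (bb K) := fun K hK => hbox K hK
  have hds_iff : ∀ K ∈ 𝓡, ∀ p : Fin n → ℤ,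
      ((∀ z ∈ K, 2 ≤ dist1 p z) ↔ 2 ≤ ds (aa K) (bb K) p) := by
    intro K hK p
    constructor
    · intro h
      have hc : clamp (aa K) (bb K) p ∈ box (aa K) (bb K) := clamp_mem (habK K hK) p
      have hcK : clamp (aa K) (bb K) p ∈ K := by rw [← hboxK K hK] at hc; exact hc
      have := h _ hcK
      rw [← dist1_clamp (habK K hK) p]
      exact this
    · intro h z hz
      have hz' : z ∈ box (aa K) (bb K) := by rw [← hboxK K hK]; exact hz
      have := ds_le_dist1 p hz'
      omega
  set D := dist1 x y with hD
  set Rel : Set (Set (Fin n → ℤ)) :=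
    {K ∈ 𝓡 | ∃ p z : Fin n → ℤ, dist1 x p ≤ D ∧ z ∈ K ∧ dist1 p z ≤ 1} with hRel
  have hRelsub : Rel ⊆ 𝓡 := fun K hK => hK.1
  have hxnot : ∀ K ∈ 𝓡, x ∉ K := by
    intro K hK hxK
    have := hx K hK x hxK
    rw [dist1_self] at this
    omega
  have hwit : ∀ K ∈ Rel, ∃ w, w ∈ gridBoundary n K ∧ dist1 x w ≤ D + 1 := by
    rintro K ⟨hK, p, z, hxp, hzK, hpz⟩
    by_cases hpK : p ∈ K
    · obtain ⟨w, hw, hd⟩ := crossing K _ x p (hxnot K hK) hpK rfl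
      exact ⟨w, hw, by omega⟩
    · obtain ⟨w, hw, hd⟩ := crossing K _ p z hpK hzK rfl
      refine ⟨w, hw, ?_⟩
      have ht := dist1_triangle x p w
      omega
  choose! wit hwit1 hwit2 using hwit
  have hRelfin : Rel.Finite := by
    have himg : wit '' Rel ⊆ {p | dist1 x p ≤ D + 1} := by
      rintro _ ⟨K, hK, rfl⟩
      exact hwit2 K hK
    have hinj : Set.InjOn wit Rel := by
      intro K hK L hL hKL
      by_contra hne
      have hs := hsep K (hRelsub hK) L (hRelsub hL) hne (wit K) (hwit1 K hK)
        (wit L) (hwit1 L hL)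
      have : (q : ℤ) < dist1 (wit K) (wit L) := hs
      rw [hKL, dist1_self] at this
      omega
    exact Set.Finite.of_finite_image ((ball_finite x (D + 1)).subset himg) hinj
  have hup : ∀ K ∈ Rel, ∀ L ∈ 𝓡, K ⊆ L → L ∈ Rel := by
    rintro K ⟨hK, p, z, h1, h2, h3⟩ L hL hKL
    exact ⟨hL, p, z, h1, hKL h2, h3⟩
  set MaxS : Set (Set (Fin n → ℤ)) := {K ∈ Rel | ∀ L ∈ Rel, K ⊆ L → K = L} with hMaxS
  have hMaxsub : MaxS ⊆ Rel := fun K hK => hK.1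
  have hMaxfin : MaxS.Finite := hRelfin.subset hMaxsub
  have hmax_ex : ∀ K ∈ Rel, ∃ M ∈ MaxS, K ⊆ M := by
    intro K hK
    have hsfin : {L ∈ Rel | K ⊆ L}.Finite := hRelfin.subset fun L hL => hL.1
    obtain ⟨M, hM, hMmax'⟩ := hsfin.exists_maximalFor id _ ⟨K, hK, subset_rfl⟩
    have hMmax : ∀ L ∈ {L ∈ Rel | K ⊆ L}, M ⊆ L → M = L :=
      fun L hL h => Set.Subset.antisymm h (hMmax' hL h)
    refine ⟨M, ⟨hM.1, ?_⟩, hM.2⟩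
    intro L hL hML
    exact hMmax L ⟨hL, hM.2.trans hML⟩ hML
  have hmaxR : ∀ M ∈ MaxS, ∀ L ∈ 𝓡, M ⊆ L → M = L := by
    intro M hM L hL hsub
    exact hM.2 L (hup M hM.1 L hL hsub) hsub
  -- shell points of maximal boxes are far from every rectangle
  have hstar : ∀ M ∈ MaxS, ∀ p ∈ Sh (aa M) (bb M), ∀ L ∈ 𝓡, ∀ z ∈ L, 2 ≤ dist1 p z := by
    intro M hM p hp L hL z hz
    have hM𝓡 : M ∈ 𝓡 := hRelsub hM.1
    by_contra hc
    push_neg at hc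
    have hpz : dist1 p z ≤ 1 := by omega
    have hdsp : ds (aa M) (bb M) p = 2 ∨ ds (aa M) (bb M) p = 3 := hp
    have hpnotbox : p ∉ box (aa M) (bb M) := by
      intro h
      have := (mem_box_iff p).mp h
      omega
    have hpnotM : p ∉ M := by rw [hboxK M hM𝓡]; exact hpnotbox
    by_cases hLM : L = M
    · subst hLM
      have hz' : z ∈ box (aa L) (bb L) := by rw [← hboxK L hM𝓡]; exact hz
      have := ds_le_dist1 p hz'
      omega
    have hMneL : M ≠ L := fun h => hLM h.symm
    set u := clamp (aa M) (bb M) p with hu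
    have huB : u ∈ gridBoundary n M := by
      rw [hboxK M hM𝓡]
      exact clamp_boundary (habK M hM𝓡) p hpnotbox
    have hdpu : dist1 p u = ds (aa M) (bb M) p := dist1_clamp (habK M hM𝓡) p
    have hdup : dist1 u p ≤ 3 := by rw [dist1_comm]; omega
    by_cases hpL : p ∈ L
    · rcases hnest M hM𝓡 L hL with hdisj | hsub | hsub
      · have huM : u ∈ M := by
          rw [hboxK M hM𝓡]
          exact clamp_mem (habK M hM𝓡) p
        have huL : u ∉ L := by
          intro h
          exact (Set.eq_empty_iff_forall_notMem.mp hdisj u) ⟨huM, h⟩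
        obtain ⟨w, hwB, hwd⟩ := crossing L _ u p huL hpL rfl
        have hs := hsep M hM𝓡 L hL hMneL u huB w hwB
        have hs' : (q : ℤ) < dist1 u w := hs
        omega
      · exact hLM ((hmaxR M hM L hL hsub).symm)
      · exact hpnotM (hsub hpL)
    · have hdz1 : dist1 p z = 1 := by
        have h0 := dist1_nonneg p z
        have hne : dist1 p z ≠ 0 := fun h => hpL ((dist1_eq_zero h) ▸ hz)
        omega
      have hzB : z ∈ gridBoundary n L := by
        refine ⟨hz, p, hpL, ?_⟩
        have : dist1 z p = 1 := by rw [dist1_comm]; exact hdz1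
        exact this
      have hs := hsep M hM𝓡 L hL hMneL u huB z hzB
      have hs' : (q : ℤ) < dist1 u z := hs
      have htri := dist1_triangle u p z
      omega
  set BigSet : Set (Fin n → ℤ) :=
    {p | dist1 x p ≤ D ∨ ∃ M ∈ MaxS, p ∈ Sh (aa M) (bb M)} with hBigSet
  have hind : ∀ S : Set (Set (Fin n → ℤ)), S.Finite → S ⊆ MaxS →
      Joined {p | p ∈ BigSet ∧ ∀ K ∈ S, 2 ≤ ds (aa K) (bb K) p} x y := by
    intro S hSfin
    refine Set.Finite.induction_on
      (motive := fun S _ => S ⊆ MaxS →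
        Joined {p | p ∈ BigSet ∧ ∀ K ∈ S, 2 ≤ ds (aa K) (bb K) p} x y)
      S hSfin ?_ ?_
    · intro _
      refine stair _ _ x y rfl ?_
      intro p hp
      refine ⟨Or.inl ?_, fun K hK => absurd hK (Set.notMem_empty K)⟩
      rw [hD]
      unfold dist1
      refine Finset.sum_le_sum fun i _ => ?_
      have := hp i
      rw [abs_eq_max_neg, abs_eq_max_neg]
      omega
    · intro K₀ S' hK₀ hS'fin IH hins
      have hK₀M : K₀ ∈ MaxS := hins (Set.mem_insert _ _)
      have hS'M : S' ⊆ MaxS := fun K hK => hins (Set.mem_insert_of_mem _ hK)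
      have hK₀𝓡 : K₀ ∈ 𝓡 := hRelsub (hMaxsub hK₀M)
      obtain ⟨ℓ, pp, h0, h1, hstp, hmm⟩ := IH hS'M
      have hds_x : 2 ≤ ds (aa K₀) (bb K₀) x := (hds_iff K₀ hK₀𝓡 x).mp (hx K₀ hK₀𝓡)
      have hds_y : 2 ≤ ds (aa K₀) (bb K₀) y := (hds_iff K₀ hK₀𝓡 y).mp (hy K₀ hK₀𝓡)
      have hsur := surgery hn (hab4 K₀ hK₀𝓡) _ ℓ x y pp h0 h1 hstp hmm hds_x hds_y
      refine hsur.mono ?_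
      rintro p (⟨⟨hbig, hS⟩, hds⟩ | hSh)
      · refine ⟨hbig, fun K hK => ?_⟩
        rcases hK with rfl | hK
        · exact hds
        · exact hS K hK
      · refine ⟨Or.inr ⟨K₀, hK₀M, hSh⟩, fun K hK => ?_⟩
        have hK𝓡 : K ∈ 𝓡 := hRelsub (hMaxsub (hins hK))
        exact (hds_iff K hK𝓡 p).mp (hstar K₀ hK₀M p hSh K hK𝓡)
  have hfinal := hind MaxS hMaxfin subset_rfl
  refine hfinal.mono ?_
  rintro p ⟨hbig, havoid⟩
  intro K hK z hz
  rcases hbig with hball | ⟨M, hM, hSh⟩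
  · by_contra hc
    push_neg at hc
    have hKRel : K ∈ Rel := ⟨hK, p, z, hball, hz, by omega⟩
    obtain ⟨M, hMM, hKM⟩ := hmax_ex K hKRel
    have h2 : 2 ≤ ds (aa M) (bb M) p := havoid M hMM
    have hM𝓡 : M ∈ 𝓡 := hRelsub (hMaxsub hMM)
    have hzM : z ∈ box (aa M) (bb M) := by rw [← hboxK M hM𝓡]; exact hKM hz
    have := ds_le_dist1 p hzM
    omega
  · exact hstar M hM p hSh K hK z hz

lemma dist1_def (x y : Fin n → ℤ) : dist1 x y = ∑ i, |x i - y i| := rfl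

end Stmt15

/-- Let `𝓡` be a rectangular `q`-toast on `ℤⁿ` (`n ≥ 2`, `q ≥ 4`) with
labeling `f_𝓡` (R on `∂𝓡`, B on `∂⁺𝓡`, G elsewhere). Then the set `U` of green points
not in `⋃𝓡` is exactly the set of points at ℓ¹-distance ≥ 2 from `⋃𝓡`, and any two
points of `U` are joined by a grid path all of whose vertices are green. -/
theorem stmt15 (n q : ℕ) (hn : 2 ≤ n) (hq : 4 ≤ q) (𝓡 : Set (Set (Fin n → ℤ)))
    (hrect : ∀ K ∈ 𝓡, ∃ a b : Fin n → ℤ, (∀ i, (q : ℤ) ≤ b i - a i) ∧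
      K = {x | ∀ i, a i ≤ x i ∧ x i ≤ b i})
    (hsep : ∀ K ∈ 𝓡, ∀ L ∈ 𝓡, K ≠ L →
      ∀ u ∈ gridBoundary n K, ∀ v ∈ gridBoundary n L, (q : ℤ) < ∑ i, |u i - v i|)
    (hnest : ∀ K ∈ 𝓡, ∀ L ∈ 𝓡, K ∩ L = ∅ ∨ K ⊆ L ∨ L ⊆ K) :
    let B𝓡 := ⋃ K ∈ 𝓡, gridBoundary n K
    let O𝓡 := ⋃ K ∈ 𝓡, gridOuterBoundary n K
    let U : Set (Fin n → ℤ) := {x | x ∉ B𝓡 ∧ x ∉ O𝓡 ∧ x ∉ ⋃₀ 𝓡}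
    U = {x : Fin n → ℤ | ∀ y ∈ ⋃₀ 𝓡, 2 ≤ ∑ i, |x i - y i|} ∧
    ∀ x ∈ U, ∀ y ∈ U, ∃ (ℓ : ℕ) (p : ℕ → Fin n → ℤ),
      p 0 = x ∧ p ℓ = y ∧ (∀ j < ℓ, (∑ i, |p j i - p (j + 1) i|) = 1) ∧
      ∀ j ≤ ℓ, p j ∉ B𝓡 ∧ p j ∉ O𝓡 := by
  intro B𝓡 O𝓡 U
  have hUeq : U = {x : Fin n → ℤ | ∀ y ∈ ⋃₀ 𝓡, 2 ≤ ∑ i, |x i - y i|} := by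
    ext p
    simp only [U, B𝓡, O𝓡, Set.mem_setOf_eq]
    constructor
    · rintro ⟨hB, hO, hU⟩ z hz
      obtain ⟨K, hK, hzK⟩ := hz
      by_contra hlt
      push_neg at hlt
      have h0 : (0 : ℤ) ≤ ∑ i, |p i - z i| := Finset.sum_nonneg fun i _ => abs_nonneg _
      have hsum : (∑ i, |p i - z i|) = 0 ∨ (∑ i, |p i - z i|) = 1 := by omega
      rcases hsum with h | h
      · have hpz : p = z := Stmt15.dist1_eq_zero (x := p) (y := z) h
        exact hU ⟨K, hK, hpz ▸ hzK⟩
      · have hpK : p ∉ K := fun hpK => hU ⟨K, hK, hpK⟩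
        exact hO (Set.mem_biUnion hK ⟨hpK, z, hzK, h⟩)
    · intro h
      refine ⟨?_, ?_, ?_⟩
      · intro hB
        obtain ⟨K, hK, hpB⟩ := Set.mem_iUnion₂.mp hB
        have := h p ⟨K, hK, hpB.1⟩
        simp at this
      · intro hO
        obtain ⟨K, hK, hpO⟩ := Set.mem_iUnion₂.mp hO
        obtain ⟨hpK, z, hzK, hsum⟩ := hpO
        have := h z ⟨K, hK, hzK⟩
        omega
      · intro hU
        have := h p hU
        simp at this
  refine ⟨hUeq, ?_⟩
  intro x hxU y hyU
  rw [hUeq] at hxU hyU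
  have hx' : ∀ K ∈ 𝓡, ∀ z ∈ K, 2 ≤ Stmt15.dist1 x z := by
    intro K hK z hz
    rw [Stmt15.dist1_def]
    exact hxU z ⟨K, hK, hz⟩
  have hy' : ∀ K ∈ 𝓡, ∀ z ∈ K, 2 ≤ Stmt15.dist1 y z := by
    intro K hK z hz
    rw [Stmt15.dist1_def]
    exact hyU z ⟨K, hK, hz⟩
  obtain ⟨ℓ, p, h0, h1, hst, hmem⟩ :=
    Stmt15.main_conn n q hn hq 𝓡 hrect hsep hnest x y hx' hy'
  refine ⟨ℓ, p, h0, h1, fun j hj => ?_, fun j hj => ⟨?_, ?_⟩⟩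
  · rw [← Stmt15.dist1_def]
    exact hst j hj
  · intro hB
    obtain ⟨K, hK, hpB⟩ := Set.mem_iUnion₂.mp hB
    have h2 := hmem j hj K hK (p j) hpB.1
    rw [Stmt15.dist1_def] at h2
    simp at h2
  · intro hO
    obtain ⟨K, hK, hpO⟩ := Set.mem_iUnion₂.mp hO
    obtain ⟨hpK, z, hzK, hsum⟩ := hpO
    have h2 := hmem j hj K hK z hzK
    rw [Stmt15.dist1_def] at h2
    omega
end

section
/- Let n ≥ 1 and consider the translation action of ℤⁿ on itself. Let 𝓡 be a family of rectangles in ℤⁿ such that distinct members have disjoint interiors of boundaries in the strong sense that for distinct K, K' ∈ 𝓡 with K' ⊄ K, dist(∂K, ∂K') > 2N where N is the largest side length of K. Then for every K = (a + [0,N₁] × ⋯ × [0,Nₙ]) ∈ 𝓡 and every index i, the triangular region Dᵢ(K) (for n = 2: D₁(K) = {a + (−1−j, t) : 0 ≤ j ≤ N₂, 0 ≤ t ≤ N₂ − j}) is disjoint from ⋃_{K'∈𝓡} ∂K'. -/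
/-- The rectangle in `ℤ²` with lower corner `a` and side lengths `N₁, N₂`. -/
def rect2 (a : ℤ × ℤ) (N₁ N₂ : ℕ) : Set (ℤ × ℤ) :=
  {p | a.1 ≤ p.1 ∧ p.1 ≤ a.1 + N₁ ∧ a.2 ≤ p.2 ∧ p.2 ≤ a.2 + N₂}

/-- The boundary of `A ⊆ ℤ²`: points of `A` at ℓ¹-distance 1 from the complement. -/
def bdry2 (A : Set (ℤ × ℤ)) : Set (ℤ × ℤ) :=
  {x | x ∈ A ∧ ∃ y, y ∉ A ∧ |x.1 - y.1| + |x.2 - y.2| = 1}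

/-- The left triangular region `D₁(K)` attached to `K = a + [0,N₁]×[0,N₂]`. -/
def D1 (a : ℤ × ℤ) (N₂ : ℕ) : Set (ℤ × ℤ) :=
  {p | ∃ j t : ℤ, 0 ≤ j ∧ j ≤ N₂ ∧ 0 ≤ t ∧ t ≤ (N₂ : ℤ) - j ∧
    p = (a.1 - 1 - j, a.2 + t)}

/-- The bottom triangular region `D₂(K)` attached to `K = a + [0,N₁]×[0,N₂]`. -/
def D2 (a : ℤ × ℤ) (N₁ : ℕ) : Set (ℤ × ℤ) :=
  {p | ∃ j s : ℤ, 0 ≤ j ∧ j ≤ N₁ ∧ 0 ≤ s ∧ s ≤ (N₁ : ℤ) - j ∧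
    p = (a.1 + s, a.2 - 1 - j)}

/-!
A point of `D₁(K)` or `D₂(K)` lies outside `K` and within ℓ¹-distance `N + 1 ≤ 2N` of a boundary
point of `K`, where `N ≥ 1` is the largest side length of `K`. A piece `K'` whose boundary contains such
a point is therefore neither `K` nor contained in `K`, so the separation hypothesis applies to it and
forbids this proximity.
-/

section Separation

variable {ι : Type*} {K : ι → Set (ℤ × ℤ)} {S : Set ι} {i : ι} {d : ℤ}

theorem lt_l1_dist_of_mem_iUnion_bdry2 (hsep : ∀ j ∈ S, K i ≠ K j → ¬ K j ⊆ K i →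
      ∀ u ∈ bdry2 (K i), ∀ v ∈ bdry2 (K j), d < |u.1 - v.1| + |u.2 - v.2|)
    ⦃p u : ℤ × ℤ⦄ (hpU : p ∈ ⋃ j ∈ S, bdry2 (K j)) (hp : p ∉ K i) (hu : u ∈ bdry2 (K i)) :
    d < |u.1 - p.1| + |u.2 - p.2| := by
  obtain ⟨j, hj, hpj⟩ := Set.mem_iUnion₂.mp hpU
  exact hsep j hj (fun h => hp (h ▸ hpj.1)) (fun h => hp (h hpj.1)) u hu p hpj

end Separation

section Triangles

variable {a p : ℤ × ℤ} {N₁ N₂ : ℕ}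

theorem notMem_rect2_of_mem_D1 (hp : p ∈ D1 a N₂) : p ∉ rect2 a N₁ N₂ := by
  obtain ⟨j, t, hj, -, -, -, rfl⟩ := hp
  rintro ⟨h, -⟩
  dsimp only at h
  omega

theorem notMem_rect2_of_mem_D2 (hp : p ∈ D2 a N₁) : p ∉ rect2 a N₁ N₂ := by
  obtain ⟨j, s, hj, -, -, -, rfl⟩ := hp
  rintro ⟨-, -, h, -⟩
  dsimp only at h
  omega

theorem exists_mem_bdry2_near_of_mem_D1 (hp : p ∈ D1 a N₂) :
    ∃ u ∈ bdry2 (rect2 a N₁ N₂), |u.1 - p.1| + |u.2 - p.2| ≤ N₂ + 1 := by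
  obtain ⟨j, t, hj, hjN, ht, htN, rfl⟩ := hp
  refine ⟨(a.1, a.2 + t), ⟨⟨le_rfl, by omega, by omega, by omega⟩, (a.1 - 1, a.2 + t),
    fun h => by have := h.1; omega, by simp⟩, ?_⟩
  dsimp only
  rw [sub_self, abs_zero, abs_of_nonneg (by omega)]
  omega

theorem exists_mem_bdry2_near_of_mem_D2 (hp : p ∈ D2 a N₁) :
    ∃ u ∈ bdry2 (rect2 a N₁ N₂), |u.1 - p.1| + |u.2 - p.2| ≤ N₁ + 1 := by
  obtain ⟨j, s, hj, hjN, hs, hsN, rfl⟩ := hp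
  refine ⟨(a.1 + s, a.2), ⟨⟨by omega, by omega, le_rfl, by omega⟩, (a.1 + s, a.2 - 1),
    fun h => by have := h.2.2.1; omega, by simp⟩, ?_⟩
  dsimp only
  rw [sub_self, abs_zero, abs_of_nonneg (by omega)]
  omega

end Triangles

/-- Let `𝓡` be a family of rectangles in `ℤ²` (side lengths ≥ 1) such that
for distinct pieces `K, K'` with `K' ⊄ K`, `dist(∂K, ∂K') > 2N` where `N` is the largest
side length of `K`. Then for every `K ∈ 𝓡` the triangular regions `D₁(K)` and `D₂(K)`
are disjoint from `⋃_{K'∈𝓡} ∂K'`. -/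
theorem stmt18 (𝓡 : Set ((ℤ × ℤ) × ℕ × ℕ))
    (hside : ∀ r ∈ 𝓡, 1 ≤ r.2.1 ∧ 1 ≤ r.2.2)
    (hsep : ∀ r ∈ 𝓡, ∀ r' ∈ 𝓡,
      rect2 r.1 r.2.1 r.2.2 ≠ rect2 r'.1 r'.2.1 r'.2.2 →
      ¬ (rect2 r'.1 r'.2.1 r'.2.2 ⊆ rect2 r.1 r.2.1 r.2.2) →
      ∀ u ∈ bdry2 (rect2 r.1 r.2.1 r.2.2), ∀ v ∈ bdry2 (rect2 r'.1 r'.2.1 r'.2.2),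
        (2 * (max r.2.1 r.2.2) : ℤ) < |u.1 - v.1| + |u.2 - v.2|) :
    ∀ r ∈ 𝓡,
      D1 r.1 r.2.2 ∩ (⋃ r' ∈ 𝓡, bdry2 (rect2 r'.1 r'.2.1 r'.2.2)) = ∅ ∧
      D2 r.1 r.2.1 ∩ (⋃ r' ∈ 𝓡, bdry2 (rect2 r'.1 r'.2.1 r'.2.2)) = ∅ := by
  rintro ⟨a, N₁, N₂⟩ hr
  have hN : 1 ≤ max N₁ N₂ := le_max_of_le_left (hside _ hr).1
  have hsepK := lt_l1_dist_of_mem_iUnion_bdry2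
    (K := fun r : (ℤ × ℤ) × ℕ × ℕ => rect2 r.1 r.2.1 r.2.2) (hsep _ hr)
  dsimp only at hsepK ⊢
  refine ⟨Set.eq_empty_of_forall_notMem ?_, Set.eq_empty_of_forall_notMem ?_⟩
  · rintro p ⟨hp, hpU⟩
    obtain ⟨u, hu, hpu⟩ := exists_mem_bdry2_near_of_mem_D1 (N₁ := N₁) hp
    have hfar := hsepK hpU (notMem_rect2_of_mem_D1 hp) hu
    omega
  · rintro p ⟨hp, hpU⟩
    obtain ⟨u, hu, hpu⟩ := exists_mem_bdry2_near_of_mem_D2 (N₂ := N₂) hp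
    have hfar := hsepK hpU (notMem_rect2_of_mem_D2 hp) hu
    omega
end
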